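/- arXiv:2302.13552 — 10 statements merged into one kernel-verified Lean document; each statement's English description precedes it below -/
import Mathlib

section
/- Let u = (r_u, c_u) ∈ E and v = (r_v, c_v) ∈ M, and set h = (r_v, K). Then for every border point w = (i, K) with 1 ≤ i ≤ R, one has d_E(u, h) + d_M(h, v) ≤ d_E(u, w) + d_M(w, v). Consequently, d(u, v) = min over w ∈ B of (d_E(u, w) + d_M(w, v)), and this minimum is attained at the border point h sharing the row of v. -/
open Finset

/-- Euclidean distance between integer grid points. -/
noncomputable def dE (u v : ℤ × ℤ) : ℝ :=
  Real.sqrt (((u.1 : ℝ) - (v.1 : ℝ)) ^ 2 + ((u.2 : ℝ) - (v.2 : ℝ)) ^ 2)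

/-- Manhattan distance between integer grid points. -/
noncomputable def dM (u v : ℤ × ℤ) : ℝ :=
  |(u.1 : ℝ) - (v.1 : ℝ)| + |(u.2 : ℝ) - (v.2 : ℝ)|

/-- EM-distance on an EM-grid with border column `K`:
Euclidean on the Euclidean side (columns ≤ K), Manhattan on the Manhattan side
(columns ≥ K), and for mixed pairs the path passes through the border point
sharing the row of the Manhattan-side endpoint. -/
noncomputable def dEM (K : ℤ) (u v : ℤ × ℤ) : ℝ :=
  if u.2 ≤ K ∧ v.2 ≤ K then dE u v
  else if K ≤ u.2 ∧ K ≤ v.2 then dM u v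
  else if u.2 ≤ K then dE u (v.1, K) + dM (v.1, K) v
  else dM u (u.1, K) + dE (u.1, K) v

/-- The EM-grid `G = {1,…,R} × {1,…,C}`. -/
noncomputable def grid (R C : ℤ) : Finset (ℤ × ℤ) := Finset.Icc 1 R ×ˢ Finset.Icc 1 C

/-- The Euclidean part `E = {1,…,R} × {1,…,K}`. -/
noncomputable def Egrid (R K : ℤ) : Finset (ℤ × ℤ) := Finset.Icc 1 R ×ˢ Finset.Icc 1 K

/-- The Manhattan part `M = {1,…,R} × {K+1,…,C}`. -/
noncomputable def Mgrid (R C K : ℤ) : Finset (ℤ × ℤ) := Finset.Icc 1 R ×ˢ Finset.Icc (K + 1) C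

/-- The border `B = {1,…,R} × {K}`. -/
noncomputable def Bgrid (R K : ℤ) : Finset (ℤ × ℤ) := Finset.Icc 1 R ×ˢ {K}

/-- Full-grid delivery cost of a dispatching point `u`. -/
noncomputable def cost (R C K : ℤ) (u : ℤ × ℤ) : ℝ :=
  2 * ∑ v ∈ grid R C, dEM K v u

/-- Middle-row cost `Ĉ(c) = 𝒞((R̄, c))` with `R̄ = ⌈R/2⌉`. -/
noncomputable def Chat (R C K : ℤ) (c : ℤ) : ℝ :=
  cost R C K ((R + 1) / 2, c)

/-- Euclidean column-cost `D_E(j)`. -/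
noncomputable def DE (R : ℤ) (j : ℤ) : ℝ :=
  (j : ℝ) + 2 * ∑ i ∈ Finset.Icc (1 : ℤ) ((R + 1) / 2 - 1), Real.sqrt ((i : ℝ) ^ 2 + (j : ℝ) ^ 2)
    + (((R - 1) % 2 : ℤ) : ℝ) * Real.sqrt ((((R + 1) / 2 : ℤ) : ℝ) ^ 2 + (j : ℝ) ^ 2)

/-- Manhattan column-cost `D_M(j)`. -/
noncomputable def DM (R : ℤ) (j : ℤ) : ℝ :=
  (j : ℝ) + 2 * ∑ i ∈ Finset.Icc (1 : ℤ) ((R + 1) / 2 - 1), ((i : ℝ) + (j : ℝ))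
    + (((R - 1) % 2 : ℤ) : ℝ) * ((((R + 1) / 2 : ℤ) : ℝ) + (j : ℝ))

/-- Partial-grid delivery cost of `u` for a demand set `H`. -/
noncomputable def costP (K : ℤ) (H : Finset (ℤ × ℤ)) (u : ℤ × ℤ) : ℝ :=
  2 * ∑ v ∈ H, dEM K v u


lemma key_sqrt (a c x y : ℝ) :
    Real.sqrt ((a - y) ^ 2 + c ^ 2) ≤ Real.sqrt ((a - x) ^ 2 + c ^ 2) + |x - y| := by
  set s := Real.sqrt ((a - x) ^ 2 + c ^ 2) with hs_def
  have h0 : 0 ≤ s := Real.sqrt_nonneg _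
  have hsq : s ^ 2 = (a - x) ^ 2 + c ^ 2 :=
    Real.sq_sqrt (by positivity)
  have habs : |a - x| ≤ s := by
    rw [← Real.sqrt_sq_eq_abs]
    exact Real.sqrt_le_sqrt (by nlinarith [sq_nonneg c])
  have h1 : (a - x) * (x - y) ≤ s * |x - y| := by
    calc (a - x) * (x - y) ≤ |a - x| * |x - y| := by
          rw [← abs_mul]; exact le_abs_self _
      _ ≤ s * |x - y| := mul_le_mul_of_nonneg_right habs (abs_nonneg _)
  have ht : |x - y| ^ 2 = (x - y) ^ 2 := sq_abs _
  calc Real.sqrt ((a - y) ^ 2 + c ^ 2) ≤ Real.sqrt ((s + |x - y|) ^ 2) := by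
        apply Real.sqrt_le_sqrt; nlinarith [abs_nonneg (x - y)]
    _ = s + |x - y| := Real.sqrt_sq (by positivity)

/-- the shortest mixed path passes through the border point sharing
the row of the Manhattan endpoint, and is the minimum over all border crossings. -/
theorem stmt_0 (R C K : ℤ) (hR : 1 ≤ R) (hK1 : 1 ≤ K) (hKC : K ≤ C)
    (u v : ℤ × ℤ) (hu : u ∈ Egrid R K) (hv : v ∈ Mgrid R C K) :
    (∀ i : ℤ, 1 ≤ i → i ≤ R →
      dE u (v.1, K) + dM (v.1, K) v ≤ dE u (i, K) + dM (i, K) v) ∧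
    IsLeast ((fun w => dE u w + dM w v) '' (↑(Bgrid R K) : Set (ℤ × ℤ))) (dEM K u v) ∧
    dEM K u v = dE u (v.1, K) + dM (v.1, K) v := by
  simp only [Egrid, Mgrid, Finset.mem_product, Finset.mem_Icc] at hu hv
  obtain ⟨⟨hu1, hu1'⟩, hu2, hu2'⟩ := hu
  obtain ⟨⟨hv1, hv1'⟩, hv2, hv2'⟩ := hv
  have hvK : ¬ v.2 ≤ K := by omega
  have hmain : ∀ i : ℤ, 1 ≤ i → i ≤ R →
      dE u (v.1, K) + dM (v.1, K) v ≤ dE u (i, K) + dM (i, K) v := by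
    intro i _ _
    simp only [dE, dM]
    have := key_sqrt (u.1 : ℝ) ((u.2 : ℝ) - (K : ℝ)) (i : ℝ) (v.1 : ℝ)
    push_cast
    simp only [sub_self, abs_zero]
    linarith
  have heq : dEM K u v = dE u (v.1, K) + dM (v.1, K) v := by
    rcases eq_or_lt_of_le hu2' with hK | hK
    · -- u.2 = K : Manhattan branch
      simp only [dEM, dM, dE, hvK, and_false, if_false, hu2', le_of_eq hK.symm,
        le_of_lt (by omega : K < v.2), and_true, true_and, if_true]
      rw [hK]; simp [Real.sqrt_sq_eq_abs]
    · have h2 : ¬ K ≤ u.2 := by omega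
      simp only [dEM, hvK, and_false, if_false, h2, false_and, if_true, hu2', if_pos]
  refine ⟨hmain, ⟨⟨(v.1, K), ?_, heq.symm⟩, ?_⟩, heq⟩
  · simp only [Bgrid, Finset.coe_product, Set.mem_prod, Finset.coe_Icc, Set.mem_Icc,
      Finset.coe_singleton, Set.mem_singleton_iff]
    exact ⟨⟨hv1, hv1'⟩, trivial⟩
  · rintro x ⟨w, hw, rfl⟩
    simp only [Bgrid, Finset.coe_product, Set.mem_prod, Finset.coe_Icc, Set.mem_Icc,
      Finset.coe_singleton, Set.mem_singleton_iff] at hw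
    obtain ⟨⟨hw1, hw1'⟩, hw2⟩ := hw
    have hww : w = (w.1, K) := by rw [← hw2]
    rw [heq, hww]
    exact hmain w.1 hw1 hw1'
end

section
/- For every point u = (r, c) ∈ G, the full-grid delivery cost satisfies 𝒞((R̄, c)) ≤ 𝒞((r, c)). In other words, the median (the point of G minimizing 𝒞) can always be taken on the middle row R̄ = ⌈R/2⌉. -/
open Finset

noncomputable def emS (j t : ℝ) : ℝ := Real.sqrt (t ^ 2 + j ^ 2)

lemma emS_neg (j t : ℝ) : emS j (-t) = emS j t := by simp [emS]

lemma emS_convex (j a b l mu : ℝ) (hl : 0 ≤ l) (hmu : 0 ≤ mu) (hs : l + mu = 1) :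
    emS j (l * a + mu * b) ≤ l * emS j a + mu * emS j b := by
  have hmu' : mu = 1 - l := by linarith
  subst hmu'
  have hA0 : 0 ≤ emS j a := Real.sqrt_nonneg _
  have hB0 : 0 ≤ emS j b := Real.sqrt_nonneg _
  have hA : (emS j a) ^ 2 = a ^ 2 + j ^ 2 := Real.sq_sqrt (by positivity)
  have hB : (emS j b) ^ 2 = b ^ 2 + j ^ 2 := Real.sq_sqrt (by positivity)
  set A := emS j a
  set B := emS j b
  have hAB : a * b + j ^ 2 ≤ A * B := by
    nlinarith [sq_nonneg (a * j - b * j), sq_nonneg (A * B + (a * b + j ^ 2)),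
      mul_nonneg hA0 hB0]
  have key : (l * a + (1 - l) * b) ^ 2 + j ^ 2 ≤ (l * A + (1 - l) * B) ^ 2 := by
    nlinarith [mul_le_mul_of_nonneg_left hAB (mul_nonneg hl hmu), hA, hB,
      mul_nonneg hl hmu]
  calc emS j (l * a + (1 - l) * b) = Real.sqrt ((l * a + (1 - l) * b) ^ 2 + j ^ 2) := rfl
    _ ≤ Real.sqrt ((l * A + (1 - l) * B) ^ 2) := Real.sqrt_le_sqrt key
    _ = l * A + (1 - l) * B :=
      Real.sqrt_sq (add_nonneg (mul_nonneg hl hA0) (mul_nonneg hmu hB0))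

lemma emS_pair (j x q q' : ℝ) (h0 : 0 ≤ q) (h1 : q ≤ q') :
    emS j (x + q) + emS j (x - q) ≤ emS j (x + q') + emS j (x - q') := by
  rcases eq_or_lt_of_le h1 with h | h
  · rw [h]
  · have hq' : 0 < q' := lt_of_le_of_lt h0 h
    set l := (q' + q) / (2 * q') with hl_def
    set mu := (q' - q) / (2 * q') with hmu_def
    have hl : 0 ≤ l := div_nonneg (by linarith) (by linarith)
    have hmu : 0 ≤ mu := div_nonneg (by linarith) (by linarith)
    have hs : l + mu = 1 := by rw [hl_def, hmu_def]; field_simp; ring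
    have e1 : l * (x + q') + mu * (x - q') = x + q := by
      rw [hl_def, hmu_def]; field_simp; ring
    have e2 : mu * (x + q') + l * (x - q') = x - q := by
      rw [hl_def, hmu_def]; field_simp; ring
    have c1 := emS_convex j (x + q') (x - q') l mu hl hmu hs
    have c2 := emS_convex j (x + q') (x - q') mu l hmu hl (by linarith)
    rw [e1] at c1
    rw [e2] at c2
    have e3 : l * emS j (x + q') + mu * emS j (x - q')
        + (mu * emS j (x + q') + l * emS j (x - q'))
        = emS j (x + q') + emS j (x - q') := by
      linear_combination (emS j (x + q') + emS j (x - q')) * hs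
    linarith

lemma emS_pointwise (j : ℝ) (s mm rr i : ℤ) (hq0 : 2 * mm ≤ s)
    (hq : s - 2 * mm ≤ ((s - 2 * rr).natAbs : ℤ)) :
    emS j ((i : ℝ) - mm) + emS j ((i : ℝ) - ((s : ℝ) - mm))
      ≤ emS j ((i : ℝ) - rr) + emS j ((i : ℝ) - ((s : ℝ) - rr)) := by
  have hA : (0 : ℝ) ≤ (s : ℝ) / 2 - mm := by
    have : ((2 * mm : ℤ) : ℝ) ≤ ((s : ℤ) : ℝ) := Int.cast_le.mpr hq0
    push_cast at this
    linarith
  have hB : (s : ℝ) / 2 - mm ≤ |(s : ℝ) / 2 - rr| := by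
    have h1 : ((s - 2 * mm : ℤ) : ℝ) ≤ (((s - 2 * rr).natAbs : ℤ) : ℝ) := Int.cast_le.mpr hq
    have h2 : (((s - 2 * rr).natAbs : ℤ) : ℝ) = |((s - 2 * rr : ℤ) : ℝ)| := by
      push_cast [Nat.cast_natAbs]
      norm_num
    rw [h2] at h1
    push_cast at h1
    rw [show (s : ℝ) / 2 - rr = ((s : ℝ) - 2 * rr) / 2 by ring, abs_div]
    rw [abs_of_nonneg (by norm_num : (0:ℝ) ≤ 2)]
    linarith
  have h1 := emS_pair j ((i : ℝ) - (s : ℝ) / 2) ((s : ℝ) / 2 - mm) |(s : ℝ) / 2 - rr| hA hB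
  have a1 : (i : ℝ) - (s : ℝ) / 2 + ((s : ℝ) / 2 - mm) = (i : ℝ) - mm := by ring
  have a2 : (i : ℝ) - (s : ℝ) / 2 - ((s : ℝ) / 2 - mm) = (i : ℝ) - ((s : ℝ) - mm) := by ring
  rw [a1, a2] at h1
  rcases abs_cases ((s : ℝ) / 2 - rr) with ⟨h, _⟩ | ⟨h, _⟩ <;> rw [h] at h1
  · have a3 : (i : ℝ) - (s : ℝ) / 2 + ((s : ℝ) / 2 - rr) = (i : ℝ) - rr := by ring
    have a4 : (i : ℝ) - (s : ℝ) / 2 - ((s : ℝ) / 2 - rr) = (i : ℝ) - ((s : ℝ) - rr) := by ring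
    rw [a3, a4] at h1
    exact h1
  · have a3 : (i : ℝ) - (s : ℝ) / 2 + -((s : ℝ) / 2 - rr) = (i : ℝ) - ((s : ℝ) - rr) := by ring
    have a4 : (i : ℝ) - (s : ℝ) / 2 - -((s : ℝ) / 2 - rr) = (i : ℝ) - rr := by ring
    rw [a3, a4] at h1
    linarith

lemma emS_reflect (R t : ℤ) (j : ℝ) :
    ∑ i ∈ Finset.Icc (1 : ℤ) R, emS j ((i : ℝ) - (t : ℝ))
      = ∑ i ∈ Finset.Icc (1 : ℤ) R, emS j ((i : ℝ) - ((R : ℝ) + 1 - (t : ℝ))) := by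
  apply Finset.sum_nbij' (fun a => R + 1 - a) (fun a => R + 1 - a)
  · intro a ha; simp only [Finset.mem_Icc] at *; omega
  · intro a ha; simp only [Finset.mem_Icc] at *; omega
  · intro a _; omega
  · intro a _; omega
  · intro a _
    have : ((R + 1 - a : ℤ) : ℝ) - ((R : ℝ) + 1 - (t : ℝ)) = -((a : ℝ) - (t : ℝ)) := by
      push_cast; ring
    rw [this, emS_neg]

lemma emS_rowsum (R r : ℤ) (j : ℝ) :
    ∑ i ∈ Finset.Icc (1 : ℤ) R, emS j ((i : ℝ) - (((R + 1) / 2 : ℤ) : ℝ))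
      ≤ ∑ i ∈ Finset.Icc (1 : ℤ) R, emS j ((i : ℝ) - (r : ℝ)) := by
  set m : ℤ := (R + 1) / 2 with hm
  have hq0 : 2 * m ≤ R + 1 := by omega
  have hq : (R + 1) - 2 * m ≤ (((R + 1) - 2 * r).natAbs : ℤ) := by omega
  have key : ∀ i ∈ Finset.Icc (1 : ℤ) R,
      emS j ((i : ℝ) - (m : ℝ)) + emS j ((i : ℝ) - (((R : ℝ) + 1) - (m : ℝ)))
        ≤ emS j ((i : ℝ) - (r : ℝ)) + emS j ((i : ℝ) - (((R : ℝ) + 1) - (r : ℝ))) := by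
    intro i _
    have := emS_pointwise j (R + 1) m r i hq0 hq
    push_cast at this ⊢
    convert this using 3 <;> ring
  have hsum := Finset.sum_le_sum key
  rw [Finset.sum_add_distrib, Finset.sum_add_distrib] at hsum
  have e1 := emS_reflect R m j
  have e2 := emS_reflect R r j
  have e1' : ∑ i ∈ Finset.Icc (1 : ℤ) R, emS j ((i : ℝ) - (((R : ℝ) + 1) - (m : ℝ)))
      = ∑ i ∈ Finset.Icc (1 : ℤ) R, emS j ((i : ℝ) - (m : ℝ)) := by
    rw [← e1]
  have e2' : ∑ i ∈ Finset.Icc (1 : ℤ) R, emS j ((i : ℝ) - (((R : ℝ) + 1) - (r : ℝ)))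
      = ∑ i ∈ Finset.Icc (1 : ℤ) R, emS j ((i : ℝ) - (r : ℝ)) := by
    rw [← e2]
  rw [e1', e2'] at hsum
  linarith

lemma dEM_decomp (K cv c : ℤ) :
    ∃ j A : ℝ, ∀ i r : ℤ, dEM K (i, cv) (r, c) = emS j ((i : ℝ) - (r : ℝ)) + A := by
  by_cases h1 : cv ≤ K ∧ c ≤ K
  · refine ⟨(cv : ℝ) - c, 0, fun i r => ?_⟩
    simp only [dEM]
    rw [if_pos h1]
    simp [dE, emS]
  · by_cases h2 : K ≤ cv ∧ K ≤ c
    · refine ⟨0, |(cv : ℝ) - c|, fun i r => ?_⟩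
      simp only [dEM]
      rw [if_neg h1, if_pos h2]
      simp [dM, emS, Real.sqrt_sq_eq_abs]
    · by_cases h3 : cv ≤ K
      · refine ⟨(cv : ℝ) - K, |(K : ℝ) - c|, fun i r => ?_⟩
        simp only [dEM]
        rw [if_neg h1, if_neg h2, if_pos h3]
        simp [dE, dM, emS]
      · refine ⟨(K : ℝ) - c, |(cv : ℝ) - K|, fun i r => ?_⟩
        simp only [dEM]
        rw [if_neg h1, if_neg h2, if_neg h3]
        simp [dE, dM, emS]
        ring

/-- the median can always be taken on the middle row. -/
theorem stmt_1 (R C K : ℤ) (hR : 1 ≤ R) (hK1 : 1 ≤ K) (hKC : K ≤ C)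
    (u : ℤ × ℤ) (hu : u ∈ grid R C) :
    cost R C K ((R + 1) / 2, u.2) ≤ cost R C K u := by
  obtain ⟨r, c⟩ := u
  simp only [cost, grid]
  apply mul_le_mul_of_nonneg_left ?_ (by norm_num : (0:ℝ) ≤ 2)
  have swap : ∀ w : ℤ × ℤ,
      ∑ v ∈ Finset.Icc (1:ℤ) R ×ˢ Finset.Icc (1:ℤ) C, dEM K v w
        = ∑ cv ∈ Finset.Icc (1:ℤ) C, ∑ i ∈ Finset.Icc (1:ℤ) R, dEM K (i, cv) w := by
    intro w
    rw [Finset.sum_product]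
    exact Finset.sum_comm
  rw [swap, swap]
  apply Finset.sum_le_sum
  intro cv _
  obtain ⟨j, A, hf⟩ := dEM_decomp K cv c
  calc ∑ i ∈ Finset.Icc (1:ℤ) R, dEM K (i, cv) ((R + 1) / 2, (r, c).2)
      = ∑ i ∈ Finset.Icc (1:ℤ) R, (emS j ((i:ℝ) - (((R + 1) / 2 : ℤ) : ℝ)) + A) :=
        Finset.sum_congr rfl (fun i _ => hf i _)
    _ ≤ ∑ i ∈ Finset.Icc (1:ℤ) R, (emS j ((i:ℝ) - (r : ℝ)) + A) := by
        rw [Finset.sum_add_distrib, Finset.sum_add_distrib]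
        exact add_le_add_left (emS_rowsum R r j) _
    _ = ∑ i ∈ Finset.Icc (1:ℤ) R, dEM K (i, cv) (r, c) :=
        Finset.sum_congr rfl (fun i _ => (hf i r).symm)
end

section
/- The row-cost strictly increases with the distance of the row from the dispatching point: for every u = (x, y) ∈ G and all integers 0 ≤ h₁ < h₂ with x + h₂ ≤ R, one has Σ_{c=1}^{C} d((x+h₁, c), u) < Σ_{c=1}^{C} d((x+h₂, c), u). -/
open Finset

/-- the row-cost strictly increases with the distance of the row
from the dispatching point. -/
theorem stmt_3 (R C K : ℤ) (hR : 1 ≤ R) (hK1 : 1 ≤ K) (hKC : K ≤ C)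
    (u : ℤ × ℤ) (hu : u ∈ grid R C) (h₁ h₂ : ℤ) (hh₁ : 0 ≤ h₁) (hlt : h₁ < h₂)
    (hup : u.1 + h₂ ≤ R) :
    ∑ c ∈ Finset.Icc (1 : ℤ) C, dEM K (u.1 + h₁, c) u <
      ∑ c ∈ Finset.Icc (1 : ℤ) C, dEM K (u.1 + h₂, c) u := by
  have hcast1 : (0:ℝ) ≤ (h₁:ℝ) := by exact_mod_cast hh₁
  have hcast2 : (h₁:ℝ) < (h₂:ℝ) := by exact_mod_cast hlt
  have key : ∀ a : ℝ, Real.sqrt ((h₁:ℝ)^2 + a^2) < Real.sqrt ((h₂:ℝ)^2 + a^2) := by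
    intro a
    apply Real.sqrt_lt_sqrt (by positivity)
    nlinarith
  have habs : |(h₁:ℝ)| < |(h₂:ℝ)| := by
    rw [abs_of_nonneg hcast1, abs_of_nonneg (by linarith)]
    exact hcast2
  apply Finset.sum_lt_sum_of_nonempty (Finset.nonempty_Icc.mpr (le_trans hK1 hKC))
  intro c hc
  simp only [dEM, dE, dM]
  split_ifs with hA hB hCc
  · -- Euclidean case
    have e1 : (↑(u.1 + h₁) : ℝ) - (u.1:ℝ) = (h₁:ℝ) := by push_cast; ring
    have e2 : (↑(u.1 + h₂) : ℝ) - (u.1:ℝ) = (h₂:ℝ) := by push_cast; ring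
    rw [e1, e2]
    exact key _
  · -- Manhattan case
    have e1 : (↑(u.1 + h₁) : ℝ) - (u.1:ℝ) = (h₁:ℝ) := by push_cast; ring
    have e2 : (↑(u.1 + h₂) : ℝ) - (u.1:ℝ) = (h₂:ℝ) := by push_cast; ring
    rw [e1, e2]
    linarith
  · -- mixed: v Euclidean, u Manhattan
    have e1 : (↑(u.1 + h₁) : ℝ) - (u.1:ℝ) = (h₁:ℝ) := by push_cast; ring
    have e2 : (↑(u.1 + h₂) : ℝ) - (u.1:ℝ) = (h₂:ℝ) := by push_cast; ring
    simp only [e1, e2]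
    have := key ((c:ℝ) - (K:ℝ))
    linarith
  · -- mixed: v Manhattan, u Euclidean
    have e1 : (↑(u.1 + h₁) : ℝ) - (u.1:ℝ) = (h₁:ℝ) := by push_cast; ring
    have e2 : (↑(u.1 + h₂) : ℝ) - (u.1:ℝ) = (h₂:ℝ) := by push_cast; ring
    simp only [e1, e2, sub_self, abs_zero]
    have := key ((K:ℝ) - (u.2:ℝ))
    linarith
end

section
/- The median column cannot lie in the interval [1, K̄ − 1]: for every integer c with 1 ≤ c ≤ K̄ − 1, there exists an integer c' with K̄ ≤ c' ≤ K such that Ĉ(c') < Ĉ(c). -/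
open Finset

lemma sqrt_lt_aux (B : ℝ) (hB : 0 ≤ B) {x y : ℝ} (hx : 0 ≤ x) (hxy : x < y) :
    Real.sqrt (B + x^2) < Real.sqrt (B + y^2) := by
  apply Real.sqrt_lt_sqrt (by positivity); nlinarith

lemma sqrt_le_aux (B : ℝ) {x y : ℝ} (hx : 0 ≤ x) (hxy : x ≤ y) :
    Real.sqrt (B + x^2) ≤ Real.sqrt (B + y^2) := by
  apply Real.sqrt_le_sqrt; nlinarith

/-- strict decrease of the Euclidean inner column sum -/
lemma innerE (B : ℝ) (hB : 0 ≤ B) (K c : ℤ) (hc : 1 ≤ c) (hK : 2*c+1 ≤ K) :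
    ∑ j ∈ Icc (1:ℤ) K, Real.sqrt (B + ((j:ℝ) - ((c:ℝ)+1))^2)
      < ∑ j ∈ Icc (1:ℤ) K, Real.sqrt (B + ((j:ℝ) - (c:ℝ))^2) := by
  set h : ℤ → ℝ := fun t => Real.sqrt (B + ((t:ℝ) - (c:ℝ))^2) with hh
  have hre : ∑ j ∈ Icc (1:ℤ) K, Real.sqrt (B + ((j:ℝ) - ((c:ℝ)+1))^2)
      = ∑ t ∈ Icc (0:ℤ) (K-1), h t := by
    have : ∀ j : ℤ, Real.sqrt (B + ((j:ℝ) - ((c:ℝ)+1))^2) = h (j - 1) := by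
      intro j; simp only [hh]; push_cast; ring_nf
    rw [Finset.sum_congr rfl fun j _ => this j]
    apply Finset.sum_nbij' (fun j => j - 1) (fun t => t + 1) <;>
      simp [Finset.mem_Icc] <;> omega
  rw [hre]
  have h1 : Icc (0:ℤ) (K-1) = insert 0 (Icc 1 (K-1)) := by
    ext x; simp [Finset.mem_Icc]; omega
  have h2 : Icc (1:ℤ) K = insert K (Icc 1 (K-1)) := by
    ext x; simp [Finset.mem_Icc]; omega
  have hn0 : (0:ℤ) ∉ Icc (1:ℤ) (K-1) := by simp
  have hnK : K ∉ Icc (1:ℤ) (K-1) := by simp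
  rw [h1, h2, Finset.sum_insert hn0, Finset.sum_insert hnK]
  have key : h 0 < h K := by
    simp only [hh]
    have e0 : (((0:ℤ):ℝ) - (c:ℝ))^2 = (c:ℝ)^2 := by push_cast; ring
    rw [e0]
    have hcast1 : (0:ℝ) ≤ (c:ℝ) := by exact_mod_cast (by omega : (0:ℤ) ≤ c)
    have hcast2 : (c:ℝ) < (K:ℝ) - (c:ℝ) := by
      have : (c:ℝ) + (c:ℝ) < (K:ℝ) := by exact_mod_cast (by omega : c + c < K)
      linarith
    exact sqrt_lt_aux B hB hcast1 hcast2
  linarith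

lemma chat_step (R C K : ℤ) (hR : 1 ≤ R) (hKC : K ≤ C) (c : ℤ)
    (hc1 : 1 ≤ c) (hcK : 2*c+1 ≤ K) :
    Chat R C K (c+1) < Chat R C K c := by
  set Rb : ℤ := (R+1)/2 with hRb
  have hsplit : ∀ b : ℤ, 1 ≤ b → b < K → (∑ v ∈ grid R C, dEM K v (Rb, b)) =
      (∑ i ∈ Icc (1:ℤ) R, ∑ j ∈ Icc (1:ℤ) K,
        Real.sqrt (((i:ℝ)-(Rb:ℝ))^2 + ((j:ℝ)-(b:ℝ))^2))
      + (∑ i ∈ Icc (1:ℤ) R, ∑ j ∈ Icc (K+1) C,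
        (((j:ℝ)-(K:ℝ)) + Real.sqrt (((i:ℝ)-(Rb:ℝ))^2 + ((K:ℝ)-(b:ℝ))^2))) := by
    intro b hb1 hb2
    rw [grid, Finset.sum_product, ← Finset.sum_add_distrib]
    apply Finset.sum_congr rfl
    intro i _
    have hcols : Icc (1:ℤ) C = Icc 1 K ∪ Icc (K+1) C := by
      ext x; simp [Finset.mem_Icc]; omega
    have hdisj : Disjoint (Icc (1:ℤ) K) (Icc (K+1) C) := by
      simp [Finset.disjoint_left, Finset.mem_Icc]; omega
    rw [hcols, Finset.sum_union hdisj]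
    congr 1
    · apply Finset.sum_congr rfl; intro j hj
      simp only [Finset.mem_Icc] at hj
      rw [dEM]; dsimp only
      rw [if_pos ⟨hj.2, by omega⟩, dE]
    · apply Finset.sum_congr rfl; intro j hj
      simp only [Finset.mem_Icc] at hj
      rw [dEM]; dsimp only
      rw [if_neg (by omega), if_neg (by omega), if_neg (by omega), dM, dE]
      dsimp only
      have h1 : |(i:ℝ) - (i:ℝ)| = 0 := by simp
      have h2 : |(j:ℝ) - (K:ℝ)| = (j:ℝ) - (K:ℝ) := by
        apply abs_of_nonneg
        have : (K:ℝ) ≤ (j:ℝ) := by exact_mod_cast (by omega : K ≤ j)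
        linarith
      rw [h1, h2]; ring
  have hcK3 : 3 ≤ K := by omega
  rw [Chat, Chat, cost, cost, hsplit c hc1 (by omega), hsplit (c+1) (by omega) (by omega)]
  have hE : (∑ i ∈ Icc (1:ℤ) R, ∑ j ∈ Icc (1:ℤ) K,
        Real.sqrt (((i:ℝ)-(Rb:ℝ))^2 + ((j:ℝ)-((c+1:ℤ):ℝ))^2))
      < (∑ i ∈ Icc (1:ℤ) R, ∑ j ∈ Icc (1:ℤ) K,
        Real.sqrt (((i:ℝ)-(Rb:ℝ))^2 + ((j:ℝ)-(c:ℝ))^2)) := by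
    apply Finset.sum_lt_sum_of_nonempty
    · rw [Finset.nonempty_Icc]; omega
    · intro i _
      have hcast : ((c+1:ℤ):ℝ) = (c:ℝ) + 1 := by push_cast; ring
      rw [show (fun j : ℤ => Real.sqrt (((i:ℝ)-(Rb:ℝ))^2 + ((j:ℝ)-((c+1:ℤ):ℝ))^2))
          = (fun j : ℤ => Real.sqrt (((i:ℝ)-(Rb:ℝ))^2 + ((j:ℝ)-((c:ℝ)+1))^2)) from by
        funext j; rw [hcast]]
      exact innerE _ (by positivity) K c hc1 hcK
  have hM : (∑ i ∈ Icc (1:ℤ) R, ∑ j ∈ Icc (K+1) C,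
        (((j:ℝ)-(K:ℝ)) + Real.sqrt (((i:ℝ)-(Rb:ℝ))^2 + ((K:ℝ)-((c+1:ℤ):ℝ))^2)))
      ≤ (∑ i ∈ Icc (1:ℤ) R, ∑ j ∈ Icc (K+1) C,
        (((j:ℝ)-(K:ℝ)) + Real.sqrt (((i:ℝ)-(Rb:ℝ))^2 + ((K:ℝ)-(c:ℝ))^2))) := by
    apply Finset.sum_le_sum; intro i _
    apply Finset.sum_le_sum; intro j _
    have h1 : (0:ℝ) ≤ (K:ℝ) - ((c+1:ℤ):ℝ) := by
      have : ((c+1:ℤ):ℝ) ≤ (K:ℝ) := by exact_mod_cast (by omega : c + 1 ≤ K)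
      linarith
    have h2 : (K:ℝ) - ((c+1:ℤ):ℝ) ≤ (K:ℝ) - (c:ℝ) := by push_cast; linarith
    have := sqrt_le_aux (((i:ℝ)-(Rb:ℝ))^2) h1 h2
    linarith
  linarith

lemma chat_desc (R C K : ℤ) (hR : 1 ≤ R) (hKC : K ≤ C) :
    ∀ n : ℕ, ∀ c : ℤ, 1 ≤ c → c + n = (K+1)/2 → 0 < n →
      Chat R C K ((K+1)/2) < Chat R C K c := by
  intro n
  induction n with
  | zero => intro c _ _ h; omega
  | succ m ih =>
    intro c hc1 hsum _
    have step := chat_step R C K hR hKC c hc1 (by omega)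
    rcases Nat.eq_zero_or_pos m with hm | hm
    · have : c + 1 = (K+1)/2 := by omega
      rwa [this] at step
    · exact lt_trans (ih (c+1) (by omega) (by omega) hm) step


/-- the median column cannot lie in `[1, K̄ - 1]`. -/
theorem stmt_9 (R C K : ℤ) (hR : 1 ≤ R) (hK1 : 1 ≤ K) (hKC : K ≤ C)
    (c : ℤ) (hc1 : 1 ≤ c) (hc2 : c ≤ (K + 1) / 2 - 1) :
    ∃ c' : ℤ, (K + 1) / 2 ≤ c' ∧ c' ≤ K ∧ Chat R C K c' < Chat R C K c := by
  refine ⟨(K+1)/2, le_refl _, by omega, ?_⟩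
  exact chat_desc R C K hR hKC ((K+1)/2 - c).toNat c hc1 (by omega) (by omega)
end

section
/- The middle-row cost function is discretely convex on the Euclidean columns [K̄, K], so it has a single minimum there: for every integer t with K̄ ≤ t ≤ K − 2, if Ĉ(t + 1) − Ĉ(t) ≥ 0 then Ĉ(t + 2) − Ĉ(t + 1) ≥ 0. -/
open Finset

lemma conv_sqrt (a x : ℝ) :
    2 * Real.sqrt (a ^ 2 + (x + 1) ^ 2) ≤
      Real.sqrt (a ^ 2 + x ^ 2) + Real.sqrt (a ^ 2 + (x + 2) ^ 2) := by
  have h1 : ∀ y : ℝ, Real.sqrt (a ^ 2 + y ^ 2) = ‖(⟨a, y⟩ : ℂ)‖ := by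
    intro y
    rw [Complex.norm_def, Complex.normSq_mk]
    ring_nf
  have h2 : (⟨a, x⟩ + ⟨a, x + 2⟩ : ℂ) = (2 : ℂ) * ⟨a, x + 1⟩ := by
    apply Complex.ext <;> simp [Complex.add_re, Complex.add_im] <;> ring
  have h3 := norm_add_le (⟨a, x⟩ : ℂ) (⟨a, x + 2⟩ : ℂ)
  rw [h2, norm_mul] at h3
  simp only [Complex.norm_ofNat] at h3
  rw [h1, h1, h1]
  linarith

lemma dEM_eval (K : ℤ) (v : ℤ × ℤ) (r c : ℤ) (hc : c ≤ K) :
    dEM K v (r, c) =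
      if v.2 ≤ K then dE v (r, c) else ((v.2 : ℝ) - (K : ℝ)) + dE (v.1, K) (r, c) := by
  unfold dEM
  by_cases hv : v.2 ≤ K
  · simp [hv, hc]
  · push_neg at hv
    have hvk : (0 : ℝ) ≤ (v.2 : ℝ) - (K : ℝ) := by
      have := hv.le
      have : (K : ℝ) ≤ (v.2 : ℝ) := by exact_mod_cast this
      linarith
    simp only [hv.not_ge, false_and, if_false]
    by_cases hck : K ≤ c
    · rw [if_pos (by exact ⟨hv.le, hck⟩)]
      have hc' : c = K := le_antisymm hc hck
      rw [hc']
      unfold dM dE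
      rw [sub_self ((K : ℝ)), zero_pow (by norm_num), add_zero, Real.sqrt_sq_eq_abs,
        abs_of_nonneg hvk]
      ring
    · rw [if_neg (by omega : ¬ ((K : ℤ) ≤ v.2 ∧ K ≤ (r, c).2))]
      unfold dM
      rw [sub_self ((v.1 : ℝ)), abs_zero, abs_of_nonneg hvk]
      ring

lemma dEM_midpoint (K : ℤ) (v : ℤ × ℤ) (r c : ℤ) (hc : c + 2 ≤ K) :
    2 * dEM K v (r, c + 1) ≤ dEM K v (r, c) + dEM K v (r, c + 2) := by
  rw [dEM_eval K v r c (by omega), dEM_eval K v r (c + 1) (by omega),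
    dEM_eval K v r (c + 2) hc]
  by_cases hv : v.2 ≤ K <;> simp only [if_pos, if_neg, hv, if_true, if_false]
  · unfold dE
    have h := conv_sqrt ((v.1 : ℝ) - (r : ℝ)) ((v.2 : ℝ) - (c : ℝ) - 2)
    have e1 : ((v.1:ℝ) - r) ^ 2 + ((v.2:ℝ) - ((c:ℤ)+1 : ℤ)) ^ 2
        = ((v.1:ℝ) - r) ^ 2 + (((v.2:ℝ) - (c:ℝ) - 2) + 1) ^ 2 := by push_cast; ring
    have e2 : ((v.1:ℝ) - r) ^ 2 + ((v.2:ℝ) - (c : ℝ)) ^ 2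
        = ((v.1:ℝ) - r) ^ 2 + (((v.2:ℝ) - (c:ℝ) - 2) + 2) ^ 2 := by ring
    have e3 : ((v.1:ℝ) - r) ^ 2 + ((v.2:ℝ) - ((c:ℤ)+2 : ℤ)) ^ 2
        = ((v.1:ℝ) - r) ^ 2 + ((v.2:ℝ) - (c:ℝ) - 2) ^ 2 := by push_cast; ring
    push_cast
    rw [show ((v.2:ℝ) - ((c:ℝ)+1)) ^ 2 = (((v.2:ℝ) - (c:ℝ) - 2) + 1) ^ 2 from by ring,
      show ((v.2:ℝ) - ((c:ℝ)+2)) ^ 2 = ((v.2:ℝ) - (c:ℝ) - 2) ^ 2 from by ring,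
      show ((v.2:ℝ) - (c:ℝ)) ^ 2 = (((v.2:ℝ) - (c:ℝ) - 2) + 2) ^ 2 from by ring]
    linarith
  · unfold dE
    have h := conv_sqrt ((v.1 : ℝ) - (r : ℝ)) ((K : ℝ) - (c : ℝ) - 2)
    push_cast
    rw [show ((K:ℝ) - ((c:ℝ)+1)) ^ 2 = (((K:ℝ) - (c:ℝ) - 2) + 1) ^ 2 from by ring,
      show ((K:ℝ) - ((c:ℝ)+2)) ^ 2 = ((K:ℝ) - (c:ℝ) - 2) ^ 2 from by ring,
      show ((K:ℝ) - (c:ℝ)) ^ 2 = (((K:ℝ) - (c:ℝ) - 2) + 2) ^ 2 from by ring]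
    linarith

/-- discrete convexity of the middle-row cost on the Euclidean
columns `[K̄, K]`. -/
theorem stmt_10 (R C K : ℤ) (hR : 1 ≤ R) (hK1 : 1 ≤ K) (hKC : K ≤ C)
    (t : ℤ) (ht1 : (K + 1) / 2 ≤ t) (ht2 : t ≤ K - 2)
    (hstep : 0 ≤ Chat R C K (t + 1) - Chat R C K t) :
    0 ≤ Chat R C K (t + 2) - Chat R C K (t + 1) := by
  have hmid : 2 * Chat R C K (t + 1) ≤ Chat R C K t + Chat R C K (t + 2) := by
    unfold Chat cost
    have hsum := Finset.sum_le_sum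
      (fun v _ => dEM_midpoint K v ((R + 1) / 2) t (by omega))
      (s := grid R C)
    rw [Finset.sum_add_distrib, ← Finset.mul_sum] at hsum
    linarith
  linarith
end

section
/- On the Manhattan side, moving the middle-row dispatching point one column to the right changes the cost by an explicit amount: for every integer c with K ≤ c < C, one has Ĉ(c + 1) − Ĉ(c) = 2·R·(2c − C). -/
open Finset

lemma abs_cast_sub_of_le {a b : ℤ} (h : a ≤ b) : |(a : ℝ) - (b : ℝ)| = (b : ℝ) - (a : ℝ) := by
  rw [abs_of_nonpos (by exact_mod_cast sub_nonpos.mpr h : (a:ℝ) - b ≤ 0)]; ring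

lemma left_side (K c m : ℤ) (hc : K ≤ c) (v : ℤ × ℤ) (hv : v.2 ≤ K) :
    dEM K v (m, c) = dE v (m, K) + ((c : ℝ) - (K : ℝ)) := by
  rcases eq_or_lt_of_le hc with h | h
  · subst h
    simp [dEM, hv]
  · rcases eq_or_lt_of_le hv with hv' | hv'
    · have h1 : ¬ (v.2 ≤ K ∧ c ≤ K) := by omega
      simp only [dEM, h1, if_false]
      rw [if_pos ⟨le_of_eq hv'.symm, le_of_lt h⟩]
      simp only [dM, dE, hv']
      rw [abs_cast_sub_of_le hc]
      rw [show ((K:ℝ) - K) = 0 by ring]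
      rw [show ((v.1:ℝ) - m) ^ 2 + 0 ^ 2 = ((v.1:ℝ) - m) ^ 2 by ring,
        Real.sqrt_sq_eq_abs]
      try ring
    · have h1 : ¬ (v.2 ≤ K ∧ c ≤ K) := by omega
      have h2 : ¬ (K ≤ v.2 ∧ K ≤ c) := by omega
      simp only [dEM, h1, h2, if_false, if_pos hv]
      simp only [dM, sub_self, abs_zero]
      rw [abs_cast_sub_of_le hc]
      ring

lemma key (K c m : ℤ) (hc : K ≤ c) (v : ℤ × ℤ) :
    dEM K v (m, c + 1) - dEM K v (m, c) = if v.2 ≤ c then (1 : ℝ) else -1 := by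
  rcases le_or_gt v.2 K with hv | hv
  · rw [if_pos (hv.trans hc)]
    rw [left_side K c m hc v hv, left_side K (c+1) m (by omega) v hv]
    push_cast; ring
  · have h1 : ¬ (v.2 ≤ K ∧ (c : ℤ) ≤ K) := by omega
    have h1' : ¬ (v.2 ≤ K ∧ (c + 1 : ℤ) ≤ K) := by omega
    have e1 : dEM K v (m, c) = dM v (m, c) := by
      simp only [dEM, h1, if_false]; rw [if_pos ⟨hv.le, hc⟩]
    have e2 : dEM K v (m, c + 1) = dM v (m, c + 1) := by
      simp only [dEM, h1', if_false]; rw [if_pos ⟨hv.le, by omega⟩]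
    rw [e1, e2]
    simp only [dM]
    rcases le_or_gt v.2 c with h | h
    · rw [if_pos h, abs_cast_sub_of_le h, abs_cast_sub_of_le (by omega : v.2 ≤ c + 1)]
      push_cast; ring
    · rw [if_neg (not_le.mpr h), abs_of_nonneg (by exact_mod_cast sub_nonneg.mpr h.le : (0:ℝ) ≤ (v.2:ℝ) - c),
        abs_of_nonneg (by exact_mod_cast sub_nonneg.mpr (by omega : (c+1 : ℤ) ≤ v.2) : (0:ℝ) ≤ (v.2:ℝ) - ((c:ℤ)+1 : ℤ))]
      push_cast; ring


/-- on the Manhattan side the one-column increment of the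
middle-row cost is `2·R·(2c − C)`. -/
theorem stmt_11 (R C K : ℤ) (hR : 1 ≤ R) (hK1 : 1 ≤ K) (hKC : K ≤ C)
    (c : ℤ) (hc1 : K ≤ c) (hc2 : c < C) :
    Chat R C K (c + 1) - Chat R C K c = 2 * (R : ℝ) * (2 * (c : ℝ) - (C : ℝ)) := by
  have hm : ∀ c', Chat R C K c' = 2 * ∑ v ∈ grid R C, dEM K v ((R + 1) / 2, c') := by
    intro c'; rfl
  rw [hm, hm, ← mul_sub, ← Finset.sum_sub_distrib]
  have : ∑ v ∈ grid R C, (dEM K v ((R + 1) / 2, c + 1) - dEM K v ((R + 1) / 2, c))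
      = ∑ v ∈ grid R C, (if v.2 ≤ c then (1 : ℝ) else -1) := by
    apply Finset.sum_congr rfl
    intro v _
    exact key K c ((R + 1) / 2) hc1 v
  rw [this]
  rw [grid, Finset.sum_product]
  have hin : ∀ i : ℤ, ∑ j ∈ Finset.Icc (1 : ℤ) C, (if (i, j).2 ≤ c then (1 : ℝ) else -1)
      = 2 * (c : ℝ) - C := by
    intro i
    have hsplit : Finset.Icc (1 : ℤ) C = Finset.Icc 1 c ∪ Finset.Ioc c C := by
      ext x; simp only [Finset.mem_Icc, Finset.mem_union, Finset.mem_Ioc]; omega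
    rw [hsplit, Finset.sum_union (by
      simp only [Finset.disjoint_left, Finset.mem_Icc, Finset.mem_Ioc]
      intro a ha hb; omega)]
    have e1 : ∑ j ∈ Finset.Icc (1 : ℤ) c, (if (i, j).2 ≤ c then (1 : ℝ) else -1)
        = (c : ℝ) := by
      rw [Finset.sum_congr rfl (fun j hj => if_pos (Finset.mem_Icc.mp hj).2)]
      have h0 : (c + 1 - 1).toNat = c.toNat := by omega
      rw [Finset.sum_const, Int.card_Icc, h0, nsmul_eq_mul, mul_one]
      exact_mod_cast Int.toNat_of_nonneg (show (0:ℤ) ≤ c by omega)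
    have e2 : ∑ j ∈ Finset.Ioc c C, (if (i, j).2 ≤ c then (1 : ℝ) else -1)
        = -((C : ℝ) - c) := by
      rw [Finset.sum_congr rfl (fun j hj => if_neg (not_le.mpr (Finset.mem_Ioc.mp hj).1))]
      rw [Finset.sum_const, Int.card_Ioc, nsmul_eq_mul]
      have h0 : ((C - c).toNat : ℝ) = (C : ℝ) - c := by
        have h1 : ((C - c).toNat : ℤ) = C - c := Int.toNat_of_nonneg (by omega)
        exact_mod_cast h1
      rw [h0]; ring
    rw [e1, e2]; ring
  rw [Finset.sum_congr rfl (fun i _ => hin i), Finset.sum_const, Int.card_Icc, nsmul_eq_mul]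
  have h0 : ((R + 1 - 1).toNat : ℝ) = (R : ℝ) := by
    have h2 : (R + 1 - 1).toNat = R.toNat := by omega
    rw [h2]
    exact_mod_cast Int.toNat_of_nonneg (show (0:ℤ) ≤ R by omega)
  rw [h0]; ring
end

section
/- If K ≤ C̄, then among the Manhattan-side columns the middle-row cost is minimized at the middle column: for every integer c with K ≤ c ≤ C, one has Ĉ(C̄) ≤ Ĉ(c). -/
open Finset

lemma dEM_E (K i j r c : ℤ) (hj : j ≤ K) (hc : K ≤ c) :
    dEM K (i, j) (r, c) = dE (i, j) (r, K) + ((c : ℝ) - (K : ℝ)) := by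
  rcases eq_or_lt_of_le hc with h | h
  · subst h
    simp [dEM, hj]
  · rcases eq_or_lt_of_le hj with hj' | hj'
    · subst hj'
      have h1 : ¬ ((i, j).2 ≤ j ∧ (r, c).2 ≤ j) := by simp; omega
      rw [dEM, if_neg h1, if_pos ⟨le_refl _, hc⟩]
      simp [dM, dE]
      rw [Real.sqrt_sq_eq_abs]
      have : |(j:ℝ) - c| = (c:ℝ) - j := by
        rw [abs_sub_comm, abs_of_nonneg]; linarith [(Int.cast_lt (R := ℝ)).2 h]
      rw [this]
    · have h1 : ¬ ((i, j).2 ≤ K ∧ (r, c).2 ≤ K) := by simp; omega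
      have h2 : ¬ (K ≤ (i, j).2 ∧ K ≤ (r, c).2) := by simp; omega
      rw [dEM, if_neg h1, if_neg h2, if_pos (by simpa using hj)]
      simp [dM]
      have : |(K:ℝ) - c| = (c:ℝ) - K := by
        rw [abs_sub_comm, abs_of_nonneg]; have := (Int.cast_lt (R := ℝ)).2 h; linarith
      rw [this]

lemma dEM_M (K i j r c : ℤ) (hj : K < j) (hc : K ≤ c) :
    dEM K (i, j) (r, c) = |(i : ℝ) - (r : ℝ)| + |(j : ℝ) - (c : ℝ)| := by
  have h1 : ¬ ((i, j).2 ≤ K ∧ (r, c).2 ≤ K) := by simp; omega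
  rw [dEM, if_neg h1, if_pos ⟨hj.le, hc⟩]
  rfl


noncomputable def gfun (C K c : ℤ) : ℤ := K * (c - K) + ∑ j ∈ Ioc K C, |j - c|


lemma g_step (C K c : ℤ) (hK : K ≤ c) (hc : c < C) :
    gfun C K (c + 1) = gfun C K c + (2 * c - C) := by
  unfold gfun
  have hdisj : Disjoint (Ioc K c) (Ioc c C) := by
    simp only [Finset.disjoint_left, mem_Ioc]
    intro a h1 h2; omega
  have hsplit : Ioc K C = Ioc K c ∪ Ioc c C := (Finset.Ioc_union_Ioc_eq_Ioc hK hc.le).symm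
  rw [hsplit, Finset.sum_union hdisj, Finset.sum_union hdisj]
  have h1 : ∑ j ∈ Ioc K c, |j - (c + 1)| = (∑ j ∈ Ioc K c, |j - c|) + (c - K) := by
    have : ∀ j ∈ Ioc K c, |j - (c + 1)| = |j - c| + 1 := by
      intro j hj; rw [mem_Ioc] at hj
      rw [abs_of_nonpos (by omega), abs_of_nonpos (by omega)]; ring
    rw [Finset.sum_congr rfl this, Finset.sum_add_distrib, Finset.sum_const, Int.card_Ioc,
      nsmul_eq_mul, mul_one] ; rw [Int.toNat_of_nonneg (by omega)]
  have h2 : ∑ j ∈ Ioc c C, |j - (c + 1)| = (∑ j ∈ Ioc c C, |j - c|) - (C - c) := by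
    have : ∀ j ∈ Ioc c C, |j - (c + 1)| = |j - c| - 1 := by
      intro j hj; rw [mem_Ioc] at hj
      rw [abs_of_nonneg (by omega), abs_of_nonneg (by omega)]; ring
    rw [Finset.sum_congr rfl this, Finset.sum_sub_distrib, Finset.sum_const, Int.card_Ioc,
      nsmul_eq_mul, mul_one] ; rw [Int.toNat_of_nonneg (by omega)]
  rw [h1, h2]; ring

lemma mono_up (f : ℤ → ℤ) (a : ℤ) : ∀ b, a ≤ b →
    (∀ d, a ≤ d → d < b → f d ≤ f (d + 1)) → f a ≤ f b := by
  have key : ∀ n : ℕ, ∀ b, a ≤ b → b - a = n →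
      (∀ d, a ≤ d → d < b → f d ≤ f (d + 1)) → f a ≤ f b := by
    intro n
    induction n with
    | zero =>
      intro b hb he _
      have hba : b = a := by omega
      subst hba
      exact le_refl _
    | succ k ih =>
      intro b hb he h
      have h1 := ih (b - 1) (by omega) (by omega) (fun d hd hdb => h d hd (by omega))
      have h2 := h (b - 1) (by omega) (by omega)
      have h3 : b - 1 + 1 = b := by ring
      rw [h3] at h2
      exact le_trans h1 h2
  intro b hb h
  exact key (b - a).toNat b hb (by omega) h

lemma mono_down (f : ℤ → ℤ) (a : ℤ) : ∀ b, a ≤ b →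
    (∀ d, a ≤ d → d < b → f (d + 1) ≤ f d) → f b ≤ f a := by
  have key : ∀ n : ℕ, ∀ b, a ≤ b → b - a = n →
      (∀ d, a ≤ d → d < b → f (d + 1) ≤ f d) → f b ≤ f a := by
    intro n
    induction n with
    | zero =>
      intro b hb he _
      have hba : b = a := by omega
      subst hba
      exact le_refl _
    | succ k ih =>
      intro b hb he h
      have h1 := ih (b - 1) (by omega) (by omega) (fun d hd hdb => h d hd (by omega))
      have h2 := h (b - 1) (by omega) (by omega)
      have h3 : b - 1 + 1 = b := by ring
      rw [h3] at h2
      exact le_trans h2 h1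
  intro b hb h
  exact key (b - a).toNat b hb (by omega) h

lemma g_mono (C K : ℤ) (hK1 : 1 ≤ K) (hKC : K ≤ C) (hKmid : K ≤ (C + 1) / 2)
    (c : ℤ) (hc1 : K ≤ c) (hc2 : c ≤ C) : gfun C K ((C + 1) / 2) ≤ gfun C K c := by
  set m := (C + 1) / 2 with hm
  have hmC : m ≤ C := by omega
  rcases le_total c m with h | h
  · refine mono_down (gfun C K) c m h (fun d hd hdm => ?_)
    rw [g_step C K d (by omega) (by omega)]; omega
  · refine mono_up (gfun C K) m c h (fun d hd hdc => ?_)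
    rw [g_step C K d (by omega) (by omega)]; omega


lemma chat_formula (R C K : ℤ) (hR : 1 ≤ R) (hK1 : 1 ≤ K) (hKC : K ≤ C)
    (c : ℤ) (hc : K ≤ c) :
    Chat R C K c = 2 * ((∑ i ∈ Icc (1:ℤ) R, ∑ j ∈ Icc (1:ℤ) K, dE (i, j) ((R + 1) / 2, K))
      + ((C : ℝ) - (K : ℝ)) * ∑ i ∈ Icc (1:ℤ) R, |(i : ℝ) - (((R + 1) / 2 : ℤ) : ℝ)|
      + (R : ℝ) * ((gfun C K c : ℤ) : ℝ)) := by
  have hdisj : Disjoint (Icc (1:ℤ) K) (Ioc K C) := by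
    simp only [Finset.disjoint_left, mem_Icc, mem_Ioc]
    intro a h1 h2; omega
  have hsplit : Icc (1:ℤ) C = Icc 1 K ∪ Ioc K C := by
    ext x; simp only [mem_Icc, mem_union, mem_Ioc]; omega
  have hcardK : ((#(Icc (1:ℤ) K) : ℕ) : ℝ) = (K : ℝ) := by
    rw [Int.card_Icc, show K + 1 - 1 = K from by ring]
    exact_mod_cast Int.toNat_of_nonneg (by omega : (0:ℤ) ≤ K)
  have hcardKC : ((#(Ioc K C) : ℕ) : ℝ) = (C : ℝ) - (K : ℝ) := by
    rw [Int.card_Ioc]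
    have : ((C - K).toNat : ℤ) = C - K := Int.toNat_of_nonneg (by omega)
    exact_mod_cast this
  have hcardR : ((#(Icc (1:ℤ) R) : ℕ) : ℝ) = (R : ℝ) := by
    rw [Int.card_Icc, show R + 1 - 1 = R from by ring]
    exact_mod_cast Int.toNat_of_nonneg (by omega : (0:ℤ) ≤ R)
  rw [Chat, cost, grid, Finset.sum_product]
  have step : ∀ i ∈ Icc (1:ℤ) R, ∑ j ∈ Icc (1:ℤ) C, dEM K (i, j) ((R + 1) / 2, c)
      = ((∑ j ∈ Icc (1:ℤ) K, dE (i, j) ((R + 1) / 2, K)) + (K : ℝ) * ((c : ℝ) - (K : ℝ)))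
        + ((((C : ℝ) - (K : ℝ)) * |(i : ℝ) - (((R + 1) / 2 : ℤ) : ℝ)|)
          + ∑ j ∈ Ioc K C, |(j : ℝ) - (c : ℝ)|) := by
    intro i _
    rw [hsplit, Finset.sum_union hdisj]
    congr 1
    · rw [Finset.sum_congr rfl (fun j hj => dEM_E K i j ((R + 1) / 2) c (mem_Icc.mp hj).2 hc),
        Finset.sum_add_distrib, Finset.sum_const, nsmul_eq_mul, hcardK]
    · rw [Finset.sum_congr rfl (fun j hj => dEM_M K i j ((R + 1) / 2) c (mem_Ioc.mp hj).1 hc),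
        Finset.sum_add_distrib, Finset.sum_const, nsmul_eq_mul, hcardKC]
  rw [Finset.sum_congr rfl step]
  have hg : ((gfun C K c : ℤ) : ℝ)
      = (K : ℝ) * ((c : ℝ) - (K : ℝ)) + ∑ j ∈ Ioc K C, |(j : ℝ) - (c : ℝ)| := by
    rw [gfun]; push_cast; ring
  rw [Finset.sum_add_distrib, Finset.sum_add_distrib, Finset.sum_add_distrib,
    Finset.sum_const, Finset.sum_const, nsmul_eq_mul, nsmul_eq_mul, hcardR,
    ← Finset.mul_sum, hg]
  ring


/-- if `K ≤ C̄`, among Manhattan-side columns the middle-row cost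
is minimized at the middle column `C̄`. -/
theorem stmt_12 (R C K : ℤ) (hR : 1 ≤ R) (hK1 : 1 ≤ K) (hKC : K ≤ C)
    (hKmid : K ≤ (C + 1) / 2) (c : ℤ) (hc1 : K ≤ c) (hc2 : c ≤ C) :
    Chat R C K ((C + 1) / 2) ≤ Chat R C K c := by
  have hmid2 : (C + 1) / 2 ≤ C := by omega
  rw [chat_formula R C K hR hK1 hKC ((C + 1) / 2) hKmid,
      chat_formula R C K hR hK1 hKC c hc1]
  have hgm := g_mono C K hK1 hKC hKmid c hc1 hc2
  have hcast : ((gfun C K ((C + 1) / 2) : ℤ) : ℝ) ≤ ((gfun C K c : ℤ) : ℝ) := by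
    exact_mod_cast hgm
  have hR0 : (0 : ℝ) ≤ (R : ℝ) := by exact_mod_cast (by omega : (0:ℤ) ≤ R)
  nlinarith [mul_le_mul_of_nonneg_left hcast hR0]
end

section
/- If K > C̄, then the median column is not greater than C̄: there exists an integer c* with 1 ≤ c* ≤ C̄ such that Ĉ(c*) ≤ Ĉ(c) for every integer c with 1 ≤ c ≤ C. In particular, Ĉ(C̄ + 1) ≥ Ĉ(C̄). -/
open Finset

lemma sqrt_key (a m c d : ℝ) (hm : 1 ≤ m) (hmc : m ≤ c) (hd : 0 ≤ d) (hdc : d ≤ c - m) :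
    d * (Real.sqrt (a^2 + m^2) - Real.sqrt (a^2 + (m-1)^2)) ≤
      Real.sqrt (a^2 + c^2) - Real.sqrt (a^2 + m^2) := by
  set S := Real.sqrt (a^2 + c^2) with hS
  set H := Real.sqrt (a^2 + m^2) with hH
  set G := Real.sqrt (a^2 + (m-1)^2) with hG
  have hm0 : (0:ℝ) ≤ m := by linarith
  have hHm : m ≤ H := by
    rw [hH]
    calc m = Real.sqrt (m^2) := by rw [Real.sqrt_sq hm0]
    _ ≤ _ := Real.sqrt_le_sqrt (by nlinarith [sq_nonneg a])
  have hHpos : (0:ℝ) < H := by linarith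
  have hGH : G ≤ H := Real.sqrt_le_sqrt (by nlinarith)
  have hG0 : 0 ≤ G := Real.sqrt_nonneg _
  have hH2 : H^2 = a^2 + m^2 := Real.sq_sqrt (by positivity)
  have hCS1 : a^2 + c*m ≤ S * H := by
    rw [hS, hH, ← Real.sqrt_mul (by positivity)]
    rw [Real.le_sqrt (by nlinarith) (by positivity)]
    nlinarith [sq_nonneg (a*(c-m))]
  have hCS2 : a^2 + m*(m-1) ≤ H * G := by
    rw [hH, hG, ← Real.sqrt_mul (by positivity)]
    rw [Real.le_sqrt (by nlinarith) (by positivity)]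
    nlinarith [sq_nonneg (a*(m-(m-1)))]
  -- H*(H-G) ≤ m
  have h3 : H * (H - G) ≤ m := by nlinarith
  -- (S - H)*H ≥ m*(c-m)
  have h4 : m * (c - m) ≤ (S - H) * H := by nlinarith
  have h5 : d * (H - G) * H ≤ (S - H) * H := by nlinarith [mul_le_mul_of_nonneg_left h3 hd]
  have := le_of_mul_le_mul_right (by linarith [h5] : d * (H-G) * H ≤ (S-H) * H) hHpos
  linarith
open Finset

lemma split_sum (K C : ℤ) (hK0 : 0 ≤ K) (hKC : K ≤ C) (f : ℤ → ℝ) :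
    ∑ j ∈ Finset.Icc 1 C, f j
      = ∑ j ∈ Finset.Icc 1 K, f j + ∑ j ∈ Finset.Ioc K C, f j := by
  rw [← Finset.sum_union]
  · congr 1
    ext x
    simp only [Finset.mem_union, Finset.mem_Icc, Finset.mem_Ioc]
    omega
  · rw [Finset.disjoint_left]
    intro x hx hx'
    simp only [Finset.mem_Icc, Finset.mem_Ioc] at hx hx'
    omega

lemma shift_Icc (a b : ℤ) (g : ℤ → ℝ) :
    ∑ j ∈ Finset.Icc a b, g j = ∑ j ∈ Finset.Icc (a-1) (b-1), g (j+1) := by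
  have : Finset.Icc a b = (Finset.Icc (a-1) (b-1)).map (addRightEmbedding 1) := by
    rw [Finset.map_add_right_Icc]; congr 1 <;> ring
  rw [this, Finset.sum_map]
  simp

lemma shift_Ioc (a b : ℤ) (g : ℤ → ℝ) :
    ∑ j ∈ Finset.Ioc a b, g j = ∑ j ∈ Finset.Ioc (a-1) (b-1), g (j+1) := by
  have : Finset.Ioc a b = (Finset.Ioc (a-1) (b-1)).map (addRightEmbedding 1) := by
    rw [Finset.map_add_right_Ioc]; congr 1 <;> ring
  rw [this, Finset.sum_map]
  simp

lemma Icc_ins_left (a b : ℤ) (h : a ≤ b) :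
    Finset.Icc a b = insert a (Finset.Icc (a+1) b) := by
  ext x; simp only [Finset.mem_Icc, Finset.mem_insert]; omega

lemma Icc_ins_right (a b : ℤ) (h : a ≤ b) :
    Finset.Icc a b = insert b (Finset.Icc a (b-1)) := by
  ext x; simp only [Finset.mem_Icc, Finset.mem_insert]; omega

lemma Ioc_ins_left (a b : ℤ) (h : a < b) :
    Finset.Ioc a b = insert (a+1) (Finset.Ioc (a+1) b) := by
  ext x; simp only [Finset.mem_Ioc, Finset.mem_insert]; omega

lemma Ioc_ins_right (a b : ℤ) (h : a < b) :
    Finset.Ioc a b = insert b (Finset.Ioc a (b-1)) := by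
  ext x; simp only [Finset.mem_Ioc, Finset.mem_insert]; omega
open Finset
lemma val_E (K c i Rb j : ℤ) (hj : j ≤ K) (hc : c ≤ K) :
    dEM K (i,j) (Rb,c) = Real.sqrt (((i:ℝ)-(Rb:ℝ))^2 + ((j:ℝ)-(c:ℝ))^2) := by
  unfold dEM
  dsimp only
  rw [if_pos ⟨hj, hc⟩, dE]

lemma val_ME (K c i Rb j : ℤ) (hj : K < j) (hc : c ≤ K) :
    dEM K (i,j) (Rb,c)
      = ((j:ℝ)-(K:ℝ)) + Real.sqrt (((i:ℝ)-(Rb:ℝ))^2 + ((K:ℝ)-(c:ℝ))^2) := by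
  have hjK : (K:ℝ) ≤ (j:ℝ) := by exact_mod_cast hj.le
  unfold dEM
  dsimp only
  rcases eq_or_lt_of_le hc with h | h
  · rw [if_neg (by omega), if_pos ⟨by omega, by omega⟩, dM]
    dsimp only
    have hcr : (c:ℝ) = (K:ℝ) := by exact_mod_cast h
    have habs : |(j:ℝ)-(K:ℝ)| = (j:ℝ)-(K:ℝ) := abs_of_nonneg (by linarith)
    rw [hcr, habs, sub_self, show ((0:ℝ))^2 = 0 by ring, add_zero,
      Real.sqrt_sq_eq_abs]
    ring
  · rw [if_neg (by omega), if_neg (by omega), if_neg (by omega), dM, dE]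
    dsimp only
    rw [sub_self, abs_zero, abs_of_nonneg (by linarith)]
    ring

lemma val_B1 (K c i Rb j : ℤ) (hj : j ≤ K) (hc : K ≤ c) :
    dEM K (i,j) (Rb,c)
      = Real.sqrt (((i:ℝ)-(Rb:ℝ))^2 + ((j:ℝ)-(K:ℝ))^2) + ((c:ℝ)-(K:ℝ)) := by
  have hcK : (K:ℝ) ≤ (c:ℝ) := by exact_mod_cast hc
  unfold dEM
  dsimp only
  rcases eq_or_lt_of_le hc with h | h
  · rw [if_pos ⟨hj, by omega⟩, dE]
    dsimp only
    have : (c:ℝ) = (K:ℝ) := by exact_mod_cast h.symm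
    rw [this]
    ring_nf
  · rcases eq_or_lt_of_le hj with hjK | hjK
    · rw [if_neg (by omega), if_pos ⟨by omega, by omega⟩, dM]
      dsimp only
      have hjr : (j:ℝ) = (K:ℝ) := by exact_mod_cast hjK
      have h1 : |(K:ℝ)-(c:ℝ)| = (c:ℝ)-(K:ℝ) := by
        rw [abs_sub_comm]; exact abs_of_nonneg (by linarith)
      rw [hjr, sub_self, h1, show ((0:ℝ))^2 = 0 by ring, add_zero,
        Real.sqrt_sq_eq_abs]
    · rw [if_neg (by omega), if_neg (by omega), if_pos hj, dE, dM]
      dsimp only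
      rw [sub_self, abs_zero, abs_of_nonpos (by linarith)]
      ring

lemma val_M (K c i Rb j : ℤ) (hj : K ≤ j) (hc : K ≤ c) (h : ¬(j ≤ K ∧ c ≤ K)) :
    dEM K (i,j) (Rb,c) = |(i:ℝ)-(Rb:ℝ)| + |(j:ℝ)-(c:ℝ)| := by
  unfold dEM
  dsimp only
  rw [if_neg h, if_pos ⟨hj, hc⟩, dM]
lemma shift1 (K : ℤ) (g : ℤ → ℝ) :
    ∑ j ∈ Finset.Icc 1 K, g j = ∑ j ∈ Finset.Icc 0 (K-1), g (j+1) := by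
  have h := shift_Icc 1 K g
  norm_num at h
  exact h

lemma shiftIoc1 (K C : ℤ) (g : ℤ → ℝ) :
    ∑ j ∈ Finset.Ioc K C, g j = ∑ j ∈ Finset.Ioc (K-1) (C-1), g (j+1) :=
  shift_Ioc K C g

lemma innerA (K C c i Rb : ℤ) (h1c : 1 ≤ c) (hcK : c + 1 ≤ K) (hKC : K ≤ C)
    (h2c : C ≤ 2*c) :
    ∑ j ∈ Finset.Icc 1 C, dEM K (i, j) (Rb, c)
      ≤ ∑ j ∈ Finset.Icc 1 C, dEM K (i, j) (Rb, c+1) := by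
  have hK0 : (0:ℤ) ≤ K := by omega
  rw [split_sum K C hK0 hKC, split_sum K C hK0 hKC]
  have hEc : ∀ c' : ℤ, c' ≤ K →
      ∑ j ∈ Finset.Icc (1:ℤ) K, dEM K (i, j) (Rb, c')
        = ∑ j ∈ Finset.Icc (1:ℤ) K,
            Real.sqrt (((i:ℝ)-(Rb:ℝ))^2 + ((j:ℝ)-(c':ℝ))^2) := by
    intro c' hc'
    refine Finset.sum_congr rfl fun j hj => ?_
    simp only [Finset.mem_Icc] at hj
    exact val_E K c' i Rb j hj.2 hc'
  have hMc : ∀ c' : ℤ, c' ≤ K →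
      ∑ j ∈ Finset.Ioc K C, dEM K (i, j) (Rb, c')
        = (∑ j ∈ Finset.Ioc K C, ((j:ℝ)-(K:ℝ)))
          + ((C-K : ℤ) : ℝ) * Real.sqrt (((i:ℝ)-(Rb:ℝ))^2 + ((K:ℝ)-(c':ℝ))^2) := by
    intro c' hc'
    rw [Finset.sum_congr rfl fun j hj => val_ME K c' i Rb j
      (by simp only [Finset.mem_Ioc] at hj; omega) hc']
    rw [Finset.sum_add_distrib, Finset.sum_const, Int.card_Ioc, nsmul_eq_mul]
    congr 2
    rw [← Int.cast_natCast, Int.toNat_of_nonneg (by omega)]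
  rw [hEc c (by omega), hEc (c+1) hcK, hMc c (by omega), hMc (c+1) (by omega)]
  -- shift the (c+1) Euclidean sum
  have hR1 : ∑ j ∈ Finset.Icc (1:ℤ) K,
      Real.sqrt (((i:ℝ)-(Rb:ℝ))^2 + ((j:ℝ)-((c+1:ℤ):ℝ))^2)
      = ∑ j ∈ Finset.Icc (0:ℤ) (K-1),
          Real.sqrt (((i:ℝ)-(Rb:ℝ))^2 + ((j:ℝ)-(c:ℝ))^2) := by
    rw [shift1]
    refine Finset.sum_congr rfl fun j _ => ?_
    congr 1
    push_cast
    ring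
  have e1 : ∑ j ∈ Finset.Icc (0:ℤ) K,
        Real.sqrt (((i:ℝ)-(Rb:ℝ))^2 + ((j:ℝ)-(c:ℝ))^2)
      = Real.sqrt (((i:ℝ)-(Rb:ℝ))^2 + (((0:ℤ):ℝ)-(c:ℝ))^2)
        + ∑ j ∈ Finset.Icc (1:ℤ) K,
            Real.sqrt (((i:ℝ)-(Rb:ℝ))^2 + ((j:ℝ)-(c:ℝ))^2) := by
    rw [Icc_ins_left 0 K hK0, Finset.sum_insert (by simp)]
    norm_num
  have e2 : ∑ j ∈ Finset.Icc (0:ℤ) K,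
        Real.sqrt (((i:ℝ)-(Rb:ℝ))^2 + ((j:ℝ)-(c:ℝ))^2)
      = Real.sqrt (((i:ℝ)-(Rb:ℝ))^2 + (((K:ℤ):ℝ)-(c:ℝ))^2)
        + ∑ j ∈ Finset.Icc (0:ℤ) (K-1),
            Real.sqrt (((i:ℝ)-(Rb:ℝ))^2 + ((j:ℝ)-(c:ℝ))^2) := by
    rw [Icc_ins_right 0 K hK0, Finset.sum_insert (by simp only [Finset.mem_Icc]; omega)]
  have key := sqrt_key ((i:ℝ)-(Rb:ℝ)) ((K:ℝ)-(c:ℝ)) (c:ℝ) ((C-K : ℤ):ℝ)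
    (by have h1 : (c:ℝ) + 1 ≤ (K:ℝ) := by exact_mod_cast hcK
        linarith)
    (by have h1 : (K:ℝ) ≤ (C:ℝ) := by exact_mod_cast hKC
        have h2 : (C:ℝ) ≤ 2*(c:ℝ) := by exact_mod_cast h2c
        linarith)
    (by have h1 : (K:ℝ) ≤ (C:ℝ) := by exact_mod_cast hKC
        push_cast
        linarith)
    (by have h2 : (C:ℝ) ≤ 2*(c:ℝ) := by exact_mod_cast h2c
        push_cast
        linarith)
  rw [show ((K:ℝ)-(c:ℝ)-1)^2 = ((K:ℝ) - ((c+1:ℤ):ℝ))^2 by push_cast; ring] at key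
  rw [show ((c:ℝ))^2 = (((0:ℤ):ℝ)-(c:ℝ))^2 by push_cast; ring] at key
  linarith [key, hR1, e1, e2]
lemma innerB (K C c i Rb : ℤ) (hK1 : 1 ≤ K) (hKc : K ≤ c) (hcC : c < C)
    (h2c : C ≤ 2*c) :
    ∑ j ∈ Finset.Icc 1 C, dEM K (i, j) (Rb, c)
      ≤ ∑ j ∈ Finset.Icc 1 C, dEM K (i, j) (Rb, c+1) := by
  have hK0 : (0:ℤ) ≤ K := by omega
  rw [split_sum K C hK0 (by omega), split_sum K C hK0 (by omega)]
  have hEc : ∀ c' : ℤ, K ≤ c' →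
      ∑ j ∈ Finset.Icc (1:ℤ) K, dEM K (i,j) (Rb,c')
        = (∑ j ∈ Finset.Icc (1:ℤ) K,
            Real.sqrt (((i:ℝ)-(Rb:ℝ))^2 + ((j:ℝ)-(K:ℝ))^2))
          + ((K:ℤ):ℝ) * ((c':ℝ)-(K:ℝ)) := by
    intro c' hc'
    rw [Finset.sum_congr rfl fun j hj => val_B1 K c' i Rb j
      (by simp only [Finset.mem_Icc] at hj; omega) hc']
    rw [Finset.sum_add_distrib, Finset.sum_const, nsmul_eq_mul, Int.card_Icc]
    congr 2
    rw [show K + 1 - 1 = K from by ring, ← Int.cast_natCast,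
      Int.toNat_of_nonneg hK0]
  have hMc : ∀ c' : ℤ, K ≤ c' →
      ∑ j ∈ Finset.Ioc K C, dEM K (i,j) (Rb,c')
        = ((C-K:ℤ):ℝ) * |(i:ℝ)-(Rb:ℝ)|
          + ∑ j ∈ Finset.Ioc K C, |(j:ℝ)-(c':ℝ)| := by
    intro c' hc'
    rw [Finset.sum_congr rfl fun j hj => val_M K c' i Rb j
      (by simp only [Finset.mem_Ioc] at hj; omega) hc'
      (by simp only [Finset.mem_Ioc] at hj; omega)]
    rw [Finset.sum_add_distrib, Finset.sum_const, nsmul_eq_mul, Int.card_Ioc]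
    congr 2
    rw [← Int.cast_natCast, Int.toNat_of_nonneg (by omega)]
  rw [hEc c hKc, hEc (c+1) (by omega), hMc c hKc, hMc (c+1) (by omega)]
  have hshift : ∑ j ∈ Finset.Ioc K C, |(j:ℝ)-((c+1:ℤ):ℝ)|
      = ∑ j ∈ Finset.Ioc (K-1) (C-1), |(j:ℝ)-(c:ℝ)| := by
    rw [shiftIoc1]
    refine Finset.sum_congr rfl fun j _ => ?_
    rw [show ((j+1:ℤ):ℝ) - ((c+1:ℤ):ℝ) = (j:ℝ)-(c:ℝ) from by push_cast; ring]
  have f1 : ∑ j ∈ Finset.Ioc (K-1) (C-1), |(j:ℝ)-(c:ℝ)|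
      = |((K:ℤ):ℝ)-(c:ℝ)| + ∑ j ∈ Finset.Ioc K (C-1), |(j:ℝ)-(c:ℝ)| := by
    rw [Ioc_ins_left (K-1) (C-1) (by omega),
      Finset.sum_insert (by simp only [Finset.mem_Ioc]; omega)]
    norm_num
  have f2 : ∑ j ∈ Finset.Ioc K C, |(j:ℝ)-(c:ℝ)|
      = |((C:ℤ):ℝ)-(c:ℝ)| + ∑ j ∈ Finset.Ioc K (C-1), |(j:ℝ)-(c:ℝ)| := by
    rw [Ioc_ins_right K C (by omega),
      Finset.sum_insert (by simp only [Finset.mem_Ioc]; omega)]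
  have hcK : (K:ℝ) ≤ (c:ℝ) := by exact_mod_cast hKc
  have hcC' : (c:ℝ) ≤ (C:ℝ) := by exact_mod_cast hcC.le
  have h2c' : (C:ℝ) ≤ 2*(c:ℝ) := by exact_mod_cast h2c
  have hK1' : (1:ℝ) ≤ (K:ℝ) := by exact_mod_cast hK1
  have hA1 : |((K:ℤ):ℝ)-(c:ℝ)| = (c:ℝ)-(K:ℝ) := by
    rw [abs_sub_comm]; exact abs_of_nonneg (by linarith)
  have hA2 : |((C:ℤ):ℝ)-(c:ℝ)| = (C:ℝ)-(c:ℝ) := abs_of_nonneg (by linarith)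
  have hc1 : ((c+1:ℤ):ℝ) = (c:ℝ)+1 := by push_cast; ring
  rw [hc1] at hshift ⊢
  linarith [hshift, f1, f2, hA1, hA2]


lemma mono_step (R C K : ℤ) (hK1 : 1 ≤ K) (hKC : K ≤ C) (c : ℤ) (hc1 : 1 ≤ c)
    (h2c : C ≤ 2*c) (hcC : c < C) :
    Chat R C K c ≤ Chat R C K (c+1) := by
  simp only [Chat, cost, grid]
  rw [Finset.sum_product, Finset.sum_product]
  have key : ∀ i ∈ Finset.Icc (1:ℤ) R,
      ∑ j ∈ Finset.Icc 1 C, dEM K (i, j) ((R+1)/2, c)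
        ≤ ∑ j ∈ Finset.Icc 1 C, dEM K (i, j) ((R+1)/2, c+1) := by
    intro i _
    by_cases hA : c + 1 ≤ K
    · exact innerA K C c i ((R+1)/2) hc1 hA hKC h2c
    · exact innerB K C c i ((R+1)/2) hK1 (by omega) hcC h2c
  have := Finset.sum_le_sum key
  linarith

/-- if `K > C̄`, the median column is not greater than `C̄`. -/
theorem stmt_13 (R C K : ℤ) (hR : 1 ≤ R) (hK1 : 1 ≤ K) (hKC : K ≤ C)
    (hKmid : (C + 1) / 2 < K) :
    (∃ cstar : ℤ, 1 ≤ cstar ∧ cstar ≤ (C + 1) / 2 ∧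
      ∀ c : ℤ, 1 ≤ c → c ≤ C → Chat R C K cstar ≤ Chat R C K c) ∧
    Chat R C K ((C + 1) / 2) ≤ Chat R C K ((C + 1) / 2 + 1) := by
  set Cb := (C+1)/2 with hCb
  have hCb1 : 1 ≤ Cb := by omega
  have hCbC : Cb < C := by omega
  have mono : ∀ c : ℤ, Cb ≤ c → c < C → Chat R C K c ≤ Chat R C K (c+1) := by
    intro c h1 h2
    exact mono_step R C K hK1 hKC c (by omega) (by omega) h2
  have mono' : ∀ b : ℤ, Cb ≤ b → b ≤ C → Chat R C K Cb ≤ Chat R C K b := by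
    intro b hb
    exact Int.le_induction
      (motive := fun b _ => b ≤ C → Chat R C K Cb ≤ Chat R C K b)
      (fun _ => le_refl _)
      (fun n hn ih hn1 => le_trans (ih (by omega)) (mono n hn (by omega)))
      b hb
  obtain ⟨cstar, hmem, hmin⟩ := Finset.exists_min_image (Finset.Icc 1 Cb)
    (Chat R C K) ⟨Cb, by simp only [Finset.mem_Icc]; omega⟩
  simp only [Finset.mem_Icc] at hmem
  refine ⟨⟨cstar, hmem.1, hmem.2, ?_⟩, ?_⟩
  · intro c h1 h2
    by_cases hcb : c ≤ Cb
    · exact hmin c (by simp only [Finset.mem_Icc]; exact ⟨h1, hcb⟩)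
    · exact le_trans (hmin Cb (by simp only [Finset.mem_Icc]; omega))
        (mono' c (by omega) h2)
  · exact mono Cb le_rfl hCbC
end

section
/- The center point u_M = (R̄, C̄) is a √2-approximation for the full-grid median problem: if 1 < K < C, then for every u ∈ G one has 𝒞((R̄, C̄)) < √2 · 𝒞(u). -/
open Finset

section Aux

lemma dE_le_dM' (u v : ℤ × ℤ) : dE u v ≤ dM u v := by
  unfold dE dM
  set x := (u.1:ℝ) - v.1 with hx
  set y := (u.2:ℝ) - v.2 with hy
  have h : x^2 + y^2 ≤ (|x| + |y|)^2 := by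
    nlinarith [abs_nonneg x, abs_nonneg y, sq_abs x, sq_abs y, abs_mul_abs_self x]
  calc Real.sqrt (x^2+y^2) ≤ Real.sqrt ((|x|+|y|)^2) := Real.sqrt_le_sqrt h
    _ = |x|+|y| := Real.sqrt_sq (by positivity)

lemma sqrt_lip (x y z : ℝ) : Real.sqrt (x^2+y^2) ≤ Real.sqrt (x^2+z^2) + |y - z| := by
  have hs : 0 ≤ Real.sqrt (x^2+z^2) := Real.sqrt_nonneg _
  have hw : 0 ≤ |y - z| := abs_nonneg _
  have hz : |z| ≤ Real.sqrt (x^2+z^2) := by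
    rw [← Real.sqrt_sq_eq_abs]
    exact Real.sqrt_le_sqrt (by nlinarith)
  have key : x^2+y^2 ≤ (Real.sqrt (x^2+z^2) + |y-z|)^2 := by
    have h2 : (Real.sqrt (x^2+z^2))^2 = x^2+z^2 := Real.sq_sqrt (by positivity)
    have h3 : z*(y-z) ≤ |z| * |y-z| := by
      calc z*(y-z) ≤ |z*(y-z)| := le_abs_self _
        _ = |z| * |y - z| := abs_mul _ _
    have h4 : |y-z|^2 = (y-z)^2 := sq_abs _
    have h5 : |z| * |y - z| ≤ Real.sqrt (x^2+z^2) * |y - z| :=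
      mul_le_mul_of_nonneg_right hz hw
    nlinarith [h2, h3, h4, h5]
  calc Real.sqrt (x^2+y^2) ≤ Real.sqrt ((Real.sqrt (x^2+z^2)+|y-z|)^2) := Real.sqrt_le_sqrt key
    _ = _ := Real.sqrt_sq (by positivity)

lemma abs_split (x y z : ℤ) (h : (x ≤ y ∧ y ≤ z) ∨ (z ≤ y ∧ y ≤ x)) :
    |(x:ℝ) - y| + |(y:ℝ) - z| = |(x:ℝ) - z| := by
  have hZ : |x - y| + |y - z| = |x - z| := by
    simp only [Int.abs_eq_natAbs]; omega
  have h' := congrArg (fun t : ℤ => (t : ℝ)) hZ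
  push_cast at h'
  exact h'

lemma dE_le_dEM (K : ℤ) (a b : ℤ × ℤ) : dE a b ≤ dEM K a b := by
  unfold dEM
  split_ifs with h1 h2 h3
  · exact le_refl _
  · exact dE_le_dM' a b
  · -- a.2 ≤ K, b.2 > K
    have : dM (b.1, K) b = |(K:ℝ) - b.2| := by
      simp [dM]
    rw [this]
    have heq : ((a.2:ℝ) - b.2) - ((a.2:ℝ) - K) = (K:ℝ) - b.2 := by ring
    calc dE a b ≤ dE a (b.1, K) + |((a.2:ℝ) - b.2) - ((a.2:ℝ) - K)| := by
          unfold dE; exact sqrt_lip _ _ _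
      _ = dE a (b.1, K) + |(K:ℝ) - b.2| := by rw [heq]
  · -- a.2 > K, b.2 < K
    have : dM a (a.1, K) = |(a.2:ℝ) - K| := by
      simp [dM]
    rw [this]
    have heq : ((a.2:ℝ) - b.2) - ((K:ℝ) - b.2) = (a.2:ℝ) - K := by ring
    have h5 : dE (a.1, K) b = Real.sqrt (((a.1:ℝ) - b.1)^2 + ((K:ℝ) - b.2)^2) := by
      simp [dE]
    calc dE a b ≤ Real.sqrt (((a.1:ℝ) - b.1)^2 + ((K:ℝ) - b.2)^2)
            + |((a.2:ℝ) - b.2) - ((K:ℝ) - b.2)| := by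
          unfold dE; exact sqrt_lip _ _ _
      _ = |(a.2:ℝ) - K| + dE (a.1, K) b := by rw [heq, h5]; ring

lemma dEM_le_dM (K : ℤ) (a b : ℤ × ℤ) : dEM K a b ≤ dM a b := by
  unfold dEM
  split_ifs with h1 h2 h3
  · exact dE_le_dM' a b
  · exact le_refl _
  · -- a.2 ≤ K, b.2 > K
    push_neg at h1 h2
    have hb : K ≤ b.2 := by
      by_contra hb
      exact absurd (h1 h3) (by omega)
    have e1 : dM (b.1, K) b = |(K:ℝ) - b.2| := by simp [dM]
    have e2 : dM a (b.1, K) = |(a.1:ℝ) - b.1| + |(a.2:ℝ) - K| := by simp [dM]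
    have e3 : |(a.2:ℝ) - K| + |(K:ℝ) - b.2| = |(a.2:ℝ) - b.2| :=
      abs_split a.2 K b.2 (Or.inl ⟨h3, hb⟩)
    calc dE a (b.1, K) + dM (b.1, K) b ≤ dM a (b.1, K) + dM (b.1, K) b :=
          add_le_add_left (dE_le_dM' _ _) _
      _ = |(a.1:ℝ) - b.1| + |(a.2:ℝ) - b.2| := by rw [e1, e2, add_assoc, e3]
      _ = dM a b := by simp [dM]
  · -- a.2 > K, b.2 < K
    push_neg at h1 h2 h3
    have ha : K ≤ a.2 := le_of_lt h3
    have hb : b.2 ≤ K := le_of_lt (h2 ha)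
    have e1 : dM a (a.1, K) = |(a.2:ℝ) - K| := by simp [dM]
    have e2 : dM (a.1, K) b = |(a.1:ℝ) - b.1| + |(K:ℝ) - b.2| := by simp [dM]
    have e3 : |(a.2:ℝ) - K| + |(K:ℝ) - b.2| = |(a.2:ℝ) - b.2| :=
      abs_split a.2 K b.2 (Or.inr ⟨hb, ha⟩)
    calc dM a (a.1, K) + dE (a.1, K) b ≤ dM a (a.1, K) + dM (a.1, K) b :=
          add_le_add_right (dE_le_dM' _ _) _
      _ = |(a.1:ℝ) - b.1| + |(a.2:ℝ) - b.2| := by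
          rw [e1, e2]; linarith [e3]
      _ = dM a b := by simp [dM]

lemma dM_le_sqrt2_dE (u v : ℤ × ℤ) : dM u v ≤ Real.sqrt 2 * dE u v := by
  unfold dM dE
  set x := (u.1:ℝ) - v.1 with hx
  set y := (u.2:ℝ) - v.2 with hy
  rw [← Real.sqrt_mul (by norm_num)]
  rw [Real.le_sqrt (by positivity) (by positivity)]
  nlinarith [sq_nonneg (|x| - |y|), sq_abs x, sq_abs y, abs_nonneg x, abs_nonneg y]

lemma median_min (n t : ℤ) :
    ∑ i ∈ Finset.Icc (1:ℤ) n, |i - (n+1)/2| ≤ ∑ i ∈ Finset.Icc (1:ℤ) n, |i - t| := by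
  have reflect : ∀ s : ℤ, ∑ i ∈ Finset.Icc (1:ℤ) n, |n+1-i - s|
      = ∑ i ∈ Finset.Icc (1:ℤ) n, |i - s| := by
    intro s
    refine Finset.sum_nbij' (fun i => n+1-i) (fun i => n+1-i) ?_ ?_ ?_ ?_ ?_
    all_goals simp only [Finset.mem_Icc]
    all_goals intros a ha
    · omega
    · omega
    · omega
    · omega
    · simp
  have key : ∀ s : ℤ, 2 * ∑ i ∈ Finset.Icc (1:ℤ) n, |i - s|
      = ∑ i ∈ Finset.Icc (1:ℤ) n, (|i - s| + |n+1-i - s|) := by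
    intro s
    rw [Finset.sum_add_distrib, reflect s, two_mul]
  have hterm : ∀ i ∈ Finset.Icc (1:ℤ) n,
      |i - (n+1)/2| + |n+1-i - (n+1)/2| ≤ |i - t| + |n+1-i - t| := by
    intro i hi
    simp only [Finset.mem_Icc] at hi
    simp only [Int.abs_eq_natAbs]
    omega
  have := Finset.sum_le_sum hterm
  rw [← key ((n+1)/2), ← key t] at this
  linarith

lemma grid_median (R C : ℤ) (u : ℤ × ℤ) :
    ∑ v ∈ grid R C, (|v.1 - (R+1)/2| + |v.2 - (C+1)/2|)
      ≤ ∑ v ∈ grid R C, (|v.1 - u.1| + |v.2 - u.2|) := by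
  have expand : ∀ a b : ℤ, ∑ v ∈ grid R C, (|v.1 - a| + |v.2 - b|)
      = (Finset.Icc (1:ℤ) C).card • (∑ r ∈ Finset.Icc (1:ℤ) R, |r - a|)
        + (Finset.Icc (1:ℤ) R).card • (∑ c ∈ Finset.Icc (1:ℤ) C, |c - b|) := by
    intro a b
    rw [grid, Finset.sum_product]
    have hrow : ∀ x ∈ Finset.Icc (1:ℤ) R,
        ∑ y ∈ Finset.Icc (1:ℤ) C, (|((x,y) : ℤ × ℤ).1 - a| + |((x,y) : ℤ × ℤ).2 - b|)
          = (Finset.Icc (1:ℤ) C).card • |x - a| + ∑ y ∈ Finset.Icc (1:ℤ) C, |y - b| := by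
      intro x _
      rw [Finset.sum_add_distrib]
      congr 1
      · simp [Finset.sum_const]
    rw [Finset.sum_congr rfl hrow, Finset.sum_add_distrib, Finset.sum_const,
      ← Finset.smul_sum]
  rw [expand, expand]
  simp only [nsmul_eq_mul]
  have hcast : ∀ s : Finset ℤ, (0:ℤ) ≤ (s.card : ℤ) := fun s => Int.ofNat_nonneg _
  have h1 := mul_le_mul_of_nonneg_left (median_min R u.1) (hcast (Finset.Icc (1:ℤ) C))
  have h2 := mul_le_mul_of_nonneg_left (median_min C u.2) (hcast (Finset.Icc (1:ℤ) R))
  linarith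

lemma sum_dM_cast (R C : ℤ) (w : ℤ × ℤ) :
    ∑ v ∈ grid R C, dM v w = ((∑ v ∈ grid R C, (|v.1 - w.1| + |v.2 - w.2|) : ℤ) : ℝ) := by
  rw [Int.cast_sum]
  refine Finset.sum_congr rfl fun v _ => ?_
  unfold dM
  push_cast
  ring

end Aux

/-- the center point `(R̄, C̄)` is a `√2`-approximation for the
full-grid median problem. -/
theorem stmt_16 (R C K : ℤ) (hR : 1 ≤ R) (hK1 : 1 < K) (hKC : K < C)
    (u : ℤ × ℤ) (hu : u ∈ grid R C) :
    cost R C K ((R + 1) / 2, (C + 1) / 2) < Real.sqrt 2 * cost R C K u := by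
  rw [grid, Finset.mem_product, Finset.mem_Icc, Finset.mem_Icc] at hu
  obtain ⟨⟨hu11, hu12⟩, hu21, hu22⟩ := hu
  set m : ℤ × ℤ := ((R + 1) / 2, (C + 1) / 2) with hm
  -- Step 1: cost m ≤ 2 * sum dM
  have S1 : ∑ v ∈ grid R C, dEM K v m ≤ ∑ v ∈ grid R C, dM v m :=
    Finset.sum_le_sum fun v _ => dEM_le_dM K v m
  -- Step 2: Manhattan median
  have S2 : ∑ v ∈ grid R C, dM v m ≤ ∑ v ∈ grid R C, dM v u := by
    rw [sum_dM_cast, sum_dM_cast]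
    exact_mod_cast grid_median R C u
  -- Step 3: strictly dM < √2 dE in total
  have hC3 : 3 ≤ C := by omega
  set c0 : ℤ := if u.2 = 1 then 2 else 1 with hc0
  set v0 : ℤ × ℤ := (u.1, c0) with hv0
  have hv0mem : v0 ∈ grid R C := by
    rw [grid, Finset.mem_product, Finset.mem_Icc, Finset.mem_Icc]
    refine ⟨⟨hu11, hu12⟩, ?_, ?_⟩ <;> simp only [hv0, hc0] <;> split <;> omega
  have hc0ne : c0 ≠ u.2 := by simp only [hc0]; split <;> omega
  have hstrict : dM v0 u < Real.sqrt 2 * dE v0 u := by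
    have e1 : dM v0 u = |(c0:ℝ) - u.2| := by simp [dM, hv0]
    have e2 : dE v0 u = |(c0:ℝ) - u.2| := by
      simp only [dE, hv0]
      rw [show ((u.1:ℝ) - u.1) = 0 by ring]
      rw [show (0:ℝ)^2 + ((c0:ℝ) - u.2)^2 = ((c0:ℝ) - u.2)^2 by ring]
      exact Real.sqrt_sq_eq_abs _
    have hpos : 0 < |(c0:ℝ) - u.2| := by
      rw [abs_pos]
      intro h
      apply hc0ne
      exact_mod_cast sub_eq_zero.mp h
    have h2 : (1:ℝ) < Real.sqrt 2 := by
      rw [show (1:ℝ) = Real.sqrt 1 by simp]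
      exact Real.sqrt_lt_sqrt (by norm_num) (by norm_num)
    rw [e1, e2]
    nlinarith
  have S3 : ∑ v ∈ grid R C, dM v u < Real.sqrt 2 * ∑ v ∈ grid R C, dE v u := by
    rw [Finset.mul_sum]
    exact Finset.sum_lt_sum (fun v _ => dM_le_sqrt2_dE v u) ⟨v0, hv0mem, hstrict⟩
  -- Step 4: dE ≤ dEM
  have S4 : ∑ v ∈ grid R C, dE v u ≤ ∑ v ∈ grid R C, dEM K v u :=
    Finset.sum_le_sum fun v _ => dE_le_dEM K v u
  have hsqrt2 : (0:ℝ) ≤ Real.sqrt 2 := Real.sqrt_nonneg _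
  unfold cost
  have := mul_le_mul_of_nonneg_left S4 hsqrt2
  nlinarith [S1, S2, S3]
end

section
/- The EM-distance is sandwiched between the Euclidean and the Manhattan distances: for all points u, v ∈ G, one has d_E(u, v) ≤ d(u, v) ≤ d_M(u, v). -/
open Finset

lemma sqrt_le_abs_add_abs (a b : ℝ) : Real.sqrt (a ^ 2 + b ^ 2) ≤ |a| + |b| := by
  have h : a ^ 2 + b ^ 2 ≤ (|a| + |b|) ^ 2 := by
    nlinarith [sq_abs a, sq_abs b, mul_nonneg (abs_nonneg a) (abs_nonneg b)]
  calc Real.sqrt (a ^ 2 + b ^ 2) ≤ Real.sqrt ((|a| + |b|) ^ 2) := Real.sqrt_le_sqrt h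
    _ = |a| + |b| := Real.sqrt_sq (by positivity)

lemma sqrt_tri (a b c : ℝ) :
    Real.sqrt (a ^ 2 + (b + c) ^ 2) ≤ Real.sqrt (a ^ 2 + b ^ 2) + |c| := by
  have h2 : Real.sqrt (a ^ 2 + b ^ 2) ^ 2 = a ^ 2 + b ^ 2 := Real.sq_sqrt (by positivity)
  have hb : |b| ≤ Real.sqrt (a ^ 2 + b ^ 2) := by
    rw [← Real.sqrt_sq_eq_abs]; exact Real.sqrt_le_sqrt (by nlinarith)
  have h : a ^ 2 + (b + c) ^ 2 ≤ (Real.sqrt (a ^ 2 + b ^ 2) + |c|) ^ 2 := by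
    have hbc : b * c ≤ |b| * |c| := le_trans (le_abs_self _) (abs_mul b c).le
    nlinarith [sq_abs c, mul_le_mul_of_nonneg_right hb (abs_nonneg c)]
  calc Real.sqrt (a ^ 2 + (b + c) ^ 2)
      ≤ Real.sqrt ((Real.sqrt (a ^ 2 + b ^ 2) + |c|) ^ 2) := Real.sqrt_le_sqrt h
    _ = _ := Real.sqrt_sq (by positivity)

/-- the EM-distance is sandwiched between the Euclidean and the
Manhattan distances. -/
theorem stmt_17 (R C K : ℤ) (hR : 1 ≤ R) (hK1 : 1 ≤ K) (hKC : K ≤ C)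
    (u v : ℤ × ℤ) (hu : u ∈ grid R C) (hv : v ∈ grid R C) :
    dE u v ≤ dEM K u v ∧ dEM K u v ≤ dM u v := by
  obtain ⟨u1, u2⟩ := u
  obtain ⟨v1, v2⟩ := v
  unfold dEM
  split_ifs with h1 h2 h3
  · exact ⟨le_refl _, dE_le_dM' _ _⟩
  · exact ⟨dE_le_dM' _ _, le_refl _⟩
  · -- u ∈ E, v strictly in M : u2 ≤ K < v2
    simp only [not_and, not_le] at h1 h2
    have hu2 : (u2:ℝ) ≤ K := by exact_mod_cast h3
    have hv2 : (K:ℝ) ≤ v2 := by exact_mod_cast (h1 h3).le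
    simp only [dE, dM]
    constructor
    · have key := sqrt_tri ((u1:ℝ) - v1) ((u2:ℝ) - K) ((K:ℝ) - v2)
      have e1 : ((u2:ℝ) - K) + ((K:ℝ) - v2) = (u2:ℝ) - v2 := by ring
      rw [e1] at key
      have e2 : |(v1:ℝ) - v1| = 0 := by simp
      rw [e2]
      linarith [key]
    · have b1 := sqrt_le_abs_add_abs ((u1:ℝ) - v1) ((u2:ℝ) - K)
      have e2 : |(v1:ℝ) - v1| = 0 := by simp
      rw [e2]
      have a1 : |(u2:ℝ) - K| = (K:ℝ) - u2 := by
        rw [abs_of_nonpos (by linarith)]; ring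
      have a2 : |(K:ℝ) - v2| = (v2:ℝ) - K := by
        rw [abs_of_nonpos (by linarith)]; ring
      have a3 : |(u2:ℝ) - v2| = (v2:ℝ) - u2 := by
        rw [abs_of_nonpos (by linarith)]; ring
      rw [a1] at b1
      rw [a2, a3]
      linarith
  · -- u strictly in M, v ∈ E
    simp only [not_and, not_le] at h1 h2 h3
    have hu2 : (K:ℝ) ≤ u2 := by exact_mod_cast h3.le
    have hv2 : (v2:ℝ) ≤ K := by
      have : v2 ≤ K := by
        by_contra h
        push_neg at h
        exact absurd (h2 h3.le) (not_lt.mpr h.le)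
      exact_mod_cast this
    simp only [dE, dM]
    constructor
    · have key := sqrt_tri ((u1:ℝ) - v1) ((K:ℝ) - v2) ((u2:ℝ) - K)
      have e1 : ((K:ℝ) - v2) + ((u2:ℝ) - K) = (u2:ℝ) - v2 := by ring
      rw [e1] at key
      have e2 : |(u1:ℝ) - u1| = 0 := by simp
      rw [e2]
      linarith [key]
    · have b1 := sqrt_le_abs_add_abs ((u1:ℝ) - v1) ((K:ℝ) - v2)
      have e2 : |(u1:ℝ) - u1| = 0 := by simp
      rw [e2]
      have a1 : |(u2:ℝ) - K| = (u2:ℝ) - K := abs_of_nonneg (by linarith)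
      have a2 : |(K:ℝ) - v2| = (K:ℝ) - v2 := abs_of_nonneg (by linarith)
      have a3 : |(u2:ℝ) - v2| = (u2:ℝ) - v2 := abs_of_nonneg (by linarith)
      rw [a2] at b1
      rw [a1, a3]
      linarith
end
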